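/- arXiv:1911.08653 — 6 statements merged into one kernel-verified Lean document; each statement's English description precedes it below -/
import Mathlib

section
/- Let T be a tournament on n vertices labeled 1,...,n whose outdegree sequence d(1) ≤ d(2) ≤ ... ≤ d(n) is nondecreasing. An upset is a pair (i,j) with i < j such that i beats j. Then the number of upsets of T is at least sum over i of max(d(i) - (i-1), 0). -/
/-- `A` is (the adjacency matrix of) a tournament on `n` vertices. -/
def IsTournament {n : ℕ} (A : Fin n → Fin n → ℤ) : Prop :=
  (∀ i, A i i = 0) ∧
    ∀ i j, i ≠ j → (A i j = 1 ∧ A j i = 0) ∨ (A i j = 0 ∧ A j i = 1)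

/-- The number of upsets of a tournament: pairs `(i,j)` with `i < j` where
`i` beats `j`. -/
def upsets {n : ℕ} (A : Fin n → Fin n → ℤ) : ℕ :=
  (Finset.univ.filter (fun p : Fin n × Fin n => p.1 < p.2 ∧ A p.1 p.2 = 1)).card

/-- If the outdegree sequence of a tournament is nondecreasing, then the number
of upsets is at least `∑ i max(d(i) - (i-1), 0)`. -/
theorem upsets_lower_bound (n : ℕ) (A : Fin n → Fin n → ℤ)
    (hA : IsTournament A) (d : Fin n → ℤ) (hd : ∀ i, d i = ∑ j, A i j)
    (hmono : Monotone d) :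
    (∑ i : Fin n, max (d i - (i : ℕ)) 0) ≤ (upsets A : ℤ) := by
  classical
  obtain ⟨hdiag, hpair⟩ := hA
  have hA01 : ∀ i j : Fin n, A i j = 0 ∨ A i j = 1 := by
    intro i j
    rcases eq_or_ne i j with rfl | h
    · exact Or.inl (hdiag i)
    · rcases hpair i j h with ⟨h1, _⟩ | ⟨h1, _⟩
      · exact Or.inr h1
      · exact Or.inl h1
  set S : Fin n → Finset (Fin n) :=
    fun i => Finset.univ.filter (fun j => i < j ∧ A i j = 1) with hS
  have hcard : upsets A = ∑ i : Fin n, (S i).card := by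
    unfold upsets
    rw [Finset.card_eq_sum_card_fiberwise (f := Prod.fst) (t := Finset.univ)
      (fun x _ => Finset.mem_univ _)]
    refine Finset.sum_congr rfl fun i _ => ?_
    apply Finset.card_bij (fun p _ => p.2)
    · intro p hp
      simp only [Finset.mem_filter, Finset.mem_univ, true_and, hS] at hp ⊢
      obtain ⟨⟨h1, h2⟩, h3⟩ := hp
      rw [← h3]; exact ⟨h1, h2⟩
    · intro p hp q hq hpq
      simp only [Finset.mem_filter] at hp hq
      exact Prod.ext (hp.2.trans hq.2.symm) hpq
    · intro j hj
      simp only [Finset.mem_filter, Finset.mem_univ, true_and, hS] at hj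
      exact ⟨(i, j), by simp [hj.1, hj.2], rfl⟩
  have hbound : ∀ i : Fin n, d i ≤ (i : ℕ) + ((S i).card : ℤ) := by
    intro i
    rw [hd]
    rw [← Finset.sum_filter_add_sum_filter_not Finset.univ (fun j => i < j) (A i)]
    have h1 : ∑ j ∈ Finset.univ.filter (fun j => i < j), A i j = ((S i).card : ℤ) := by
      have : ∀ j ∈ Finset.univ.filter (fun j => i < j), A i j = if A i j = 1 then 1 else 0 := by
        intro j hj
        rcases hA01 i j with h | h <;> simp [h]
      rw [Finset.sum_congr rfl this, Finset.sum_boole, Finset.filter_filter]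
    have h2 : ∑ j ∈ Finset.univ.filter (fun j => ¬ i < j), A i j ≤ (i : ℕ) := by
      have hset : Finset.univ.filter (fun j : Fin n => ¬ i < j) = Finset.Iic i := by
        ext j; simp [not_lt]
      rw [hset, ← Finset.Iio_insert, Finset.sum_insert (by simp), hdiag i]
      calc (0 : ℤ) + ∑ j ∈ Finset.Iio i, A i j ≤ ∑ j ∈ Finset.Iio i, 1 := by
            rw [zero_add]
            refine Finset.sum_le_sum fun j _ => ?_
            rcases hA01 i j with h | h <;> simp [h]
        _ = ((Finset.Iio i).card : ℤ) := by simp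
        _ = (i : ℕ) := by simp
    linarith [h1, h2]
  calc (∑ i : Fin n, max (d i - (i : ℕ)) 0)
      ≤ ∑ i : Fin n, ((S i).card : ℤ) := by
        refine Finset.sum_le_sum fun i _ => ?_
        exact max_le (by linarith [hbound i]) (Int.natCast_nonneg _)
    _ = (upsets A : ℤ) := by rw [hcard]; push_cast; ring
end

section
/- Let R be a feasible score sequence of length n whose normalized score vector H_R = (h_1,...,h_n), h_i = r_i - (i-1), is a concatenation of symmetric vectors (each block either all zeros or of the form (p, p-1, ..., 1, 0, ..., 0, -1, ..., -p)). Then there is exactly one tournament matrix with score sequence R achieving the minimum number of upsets. -/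
/-- `r` is a feasible score sequence of length `n`: nondecreasing, total sum
`n(n-1)/2`, and satisfying the Landau inequalities. -/
def IsFeasible (n : ℕ) (r : Fin n → ℤ) : Prop :=
  Monotone r ∧ (∑ i, r i) = (n.choose 2 : ℤ) ∧
    ∀ k : ℕ, k ≤ n →
      (k.choose 2 : ℤ) ≤ ∑ i ∈ Finset.univ.filter (fun i : Fin n => (i : ℕ) < k), r i

/-- There is exactly one tournament matrix with score sequence `r` attaining the
minimum number of upsets, i.e. `|U_min(R)| = 1`. -/
def UminUnique {n : ℕ} (r : Fin n → ℤ) : Prop :=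
  ∃! A : Fin n → Fin n → ℤ,
    IsTournament A ∧ (∀ i, (∑ j, A i j) = r i) ∧
      ∀ B : Fin n → Fin n → ℤ, IsTournament B → (∀ i, (∑ j, B i j) = r i) →
        upsets A ≤ upsets B

/-- The symmetric block `(p, p-1, ..., 1, 0^t, -1, -2, ..., -p)`. -/
def symBlock (p t : ℕ) : List ℤ :=
  ((List.range p).map (fun s => (p : ℤ) - s)) ++ List.replicate t 0 ++
    (List.range p).map (fun s => -((s : ℤ) + 1))

/-- A symmetric vector: either all zeros, or `(p, ..., 1, 0^t, -1, ..., -p)`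
for some positive `p`. -/
def IsSymBlock (B : List ℤ) : Prop :=
  (∃ t, B = List.replicate t 0) ∨ ∃ p t, 0 < p ∧ B = symBlock p t

/-- `H` is a concatenation of symmetric vectors. -/
def IsConcatSym (H : List ℤ) : Prop :=
  ∃ L : List (List ℤ), H = L.flatten ∧ ∀ B ∈ L, IsSymBlock B

/-- The normalized score vector `h_i = r_i - (i-1)` of `r`, as a list. -/
def normalized (n : ℕ) (r : Fin n → ℤ) : List ℤ :=
  List.ofFn (fun i : Fin n => r i - (i : ℕ))

/-
For a tournament `B` with score vector `r`, the number of upsets `(i, j)` with `i < k ≤ j` is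
`∑_{i<k} (r i - i)`, so it depends on `r` alone. If the normalized scores are a concatenation of
symmetric blocks, this number vanishes at the block boundaries, so every upset lies inside a block,
and inside a block `(p, …, 1, 0^t, -1, …, -p)` the `p(p+1)/2` upsets crossing its midpoint are
unavoidable. The staircase tournament, in which the `a`-th of the first `p` vertices of a block
beats the last `p - a` vertices of that block and every other game is won by the vertex with the
larger index, has score vector `r` and exactly these upsets. Conversely, if `B` attains the bound,
every upset of `B` crosses the midpoint of its block; inclusion-exclusion between the upsets with
row `< s + a + 1` and those with column `≥ s + p + t + a` (both counts fixed by `r`) then puts the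
`a`-th staircase row into `B` for every `a < p`, so `B` is the staircase.
-/

open Finset

namespace IsTournament

variable {n : ℕ} {A B : Fin n → Fin n → ℤ}

lemma add_swap (hA : IsTournament A) {i j : Fin n} (h : i ≠ j) : A i j + A j i = 1 := by
  rcases hA.2 i j h with ⟨h1, h2⟩ | ⟨h1, h2⟩ <;> simp [h1, h2]

lemma eq_zero_or_eq_one (hA : IsTournament A) (i j : Fin n) : A i j = 0 ∨ A i j = 1 := by
  by_cases h : i = j
  · exact .inl (h ▸ hA.1 i)
  · rcases hA.2 i j h with ⟨h1, -⟩ | ⟨h1, -⟩ <;> simp [h1]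

lemma two_mul_sum_sum (hA : IsTournament A) (S : Finset (Fin n)) :
    2 * ∑ i ∈ S, ∑ j ∈ S, A i j = #S * (#S - 1 : ℤ) := by
  have hpair : ∀ i ∈ S, ∑ j ∈ S, (A i j + A j i) = #S - 1 := by
    intro i hi
    rw [← Finset.sum_erase_add _ _ hi, hA.1 i,
      Finset.sum_congr rfl fun j hj => hA.add_swap (Finset.ne_of_mem_erase hj).symm]
    simp [Finset.card_erase_of_mem hi, Nat.cast_sub (Finset.card_pos.mpr ⟨i, hi⟩)]
  calc 2 * ∑ i ∈ S, ∑ j ∈ S, A i j = ∑ i ∈ S, ∑ j ∈ S, (A i j + A j i) := by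
        simp only [Finset.sum_add_distrib, two_mul]
        rw [Finset.sum_comm (f := fun i j => A j i)]
    _ = #S * (#S - 1 : ℤ) := by
        rw [Finset.sum_congr rfl hpair, Finset.sum_const, nsmul_eq_mul]

end IsTournament

namespace Tournament

variable {n : ℕ}

def upsetSet (A : Fin n → Fin n → ℤ) : Finset (Fin n × Fin n) :=
  univ.filter fun p => p.1 < p.2 ∧ A p.1 p.2 = 1

lemma upsets_eq_card (A : Fin n → Fin n → ℤ) : upsets A = #(upsetSet A) := rfl

theorem _root_.IsTournament.ext_of_upsetSet_eq {A B : Fin n → Fin n → ℤ} (hA : IsTournament A)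
    (hB : IsTournament B) (h : upsetSet A = upsetSet B) : A = B := by
  have hlt : ∀ i j, i < j → A i j = B i j := by
    intro i j hij
    have hiff : A i j = 1 ↔ B i j = 1 := by
      simpa [upsetSet, hij] using congrArg ((i, j) ∈ ·) h
    rcases hA.eq_zero_or_eq_one i j with h1 | h1 <;>
      rcases hB.eq_zero_or_eq_one i j with h2 | h2 <;> simp_all
  funext i j
  rcases lt_trichotomy i j with hij | rfl | hij
  · exact hlt i j hij
  · rw [hA.1, hB.1]
  · linarith [hA.add_swap hij.ne', hB.add_swap hij.ne', hlt j i hij]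

def crossing (U : Finset (Fin n × Fin n)) (k : ℕ) : Finset (Fin n × Fin n) :=
  U.filter fun u => (u.1 : ℕ) < k ∧ k ≤ u.2

theorem _root_.IsTournament.card_crossing_upsetSet {A : Fin n → Fin n → ℤ} (hA : IsTournament A)
    (k : ℕ) :
    (#(crossing (upsetSet A) k) : ℤ) =
      ∑ i ∈ univ.filter (fun i : Fin n => (i : ℕ) < k),
        ∑ j ∈ (univ.filter (fun i : Fin n => (i : ℕ) < k))ᶜ, A i j := by
  set S := univ.filter (fun i : Fin n => (i : ℕ) < k)
  have hcross : crossing (upsetSet A) k = (S ×ˢ Sᶜ).filter fun u => A u.1 u.2 = 1 := by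
    ext u
    simp only [crossing, upsetSet, S, mem_filter, mem_univ, true_and, mem_product, mem_compl]
    omega
  rw [← Finset.sum_product', hcross, ← Finset.sum_boole]
  refine Finset.sum_congr rfl fun u _ => ?_
  rcases hA.eq_zero_or_eq_one u.1 u.2 with h | h <;> simp [h]

theorem _root_.IsTournament.card_crossing_eq {A B : Fin n → Fin n → ℤ} (hA : IsTournament A)
    (hB : IsTournament B) (h : ∀ i, ∑ j, A i j = ∑ j, B i j) (k : ℕ) :
    #(crossing (upsetSet A) k) = #(crossing (upsetSet B) k) := by
  set S := univ.filter (fun i : Fin n => (i : ℕ) < k)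
  have key : ∀ C : Fin n → Fin n → ℤ, IsTournament C →
      2 * (#(crossing (upsetSet C) k) : ℤ) = 2 * ∑ i ∈ S, ∑ j, C i j - #S * (#S - 1) := by
    intro C hC
    simp only [hC.card_crossing_upsetSet, ← hC.two_mul_sum_sum S, ← Finset.sum_add_sum_compl S,
      Finset.sum_add_distrib]
    ring
  have hsum : ∑ i ∈ S, ∑ j, A i j = ∑ i ∈ S, ∑ j, B i j := Finset.sum_congr rfl fun i _ => h i
  have := key A hA
  have := key B hB
  omega

def ofUpsets (S : Finset (Fin n × Fin n)) (i j : Fin n) : ℤ :=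
  if i < j then (if (i, j) ∈ S then 1 else 0)
  else if j < i then (if (j, i) ∈ S then 0 else 1) else 0

lemma isTournament_ofUpsets (S : Finset (Fin n × Fin n)) : IsTournament (ofUpsets S) := by
  refine ⟨fun i => by simp [ofUpsets], fun i j h => ?_⟩
  rcases lt_or_gt_of_ne h with h | h <;> by_cases hm : (i, j) ∈ S <;> by_cases hm' : (j, i) ∈ S <;>
    simp [ofUpsets, h, h.not_gt, hm, hm']

lemma upsetSet_ofUpsets {S : Finset (Fin n × Fin n)} (hS : ∀ u ∈ S, u.1 < u.2) :
    upsetSet (ofUpsets S) = S := by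
  ext ⟨i, j⟩
  by_cases hij : i < j
  · by_cases hm : (i, j) ∈ S <;> simp [upsetSet, ofUpsets, hij, hm]
  · simp only [upsetSet, mem_filter, mem_univ, true_and, hij, false_and, false_iff]
    exact fun hm => hij (hS _ hm)

def rowCount (S : Finset (Fin n × Fin n)) (i : Fin n) : ℕ := #{j | (i, j) ∈ S}

def colCount (S : Finset (Fin n × Fin n)) (j : Fin n) : ℕ := #{i | (i, j) ∈ S}

lemma rowCount_union {S T : Finset (Fin n × Fin n)} (h : Disjoint S T) (i : Fin n) :
    rowCount (S ∪ T) i = rowCount S i + rowCount T i := by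
  simp only [rowCount, mem_union, filter_or]
  refine card_union_of_disjoint (disjoint_filter.mpr fun j _ hS hT => ?_)
  exact disjoint_left.mp h hS hT

lemma colCount_union {S T : Finset (Fin n × Fin n)} (h : Disjoint S T) (j : Fin n) :
    colCount (S ∪ T) j = colCount S j + colCount T j := by
  simp only [colCount, mem_union, filter_or]
  refine card_union_of_disjoint (disjoint_filter.mpr fun i _ hS hT => ?_)
  exact disjoint_left.mp h hS hT

lemma sum_ofUpsets {S : Finset (Fin n × Fin n)} (hS : ∀ u ∈ S, u.1 < u.2) (i : Fin n) :
    ∑ j, ofUpsets S i j = (i : ℕ) + rowCount S i - colCount S i := by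
  have hpt : ∀ j, ofUpsets S i j = (if (i, j) ∈ S then 1 else 0) +
      (if (j : ℕ) < i then 1 else 0) - (if (j, i) ∈ S then 1 else 0) := by
    intro j
    have h1 : (i, j) ∈ S → i < j := hS _
    have h2 : (j, i) ∈ S → j < i := hS _
    clear hS
    unfold ofUpsets
    split_ifs <;> simp_all <;> omega
  simp only [hpt, Finset.sum_sub_distrib, Finset.sum_add_distrib, Finset.sum_boole, rowCount,
    colCount, Fin.card_filter_val_lt, min_eq_right i.isLt.le]
  ring

-- `symBlock` maps over `List.range p` lifted to `List ℤ` by the monadic coercion.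
lemma symBlock_eq (p t : ℕ) : symBlock p t = (List.range p).map (fun s : ℕ => (p : ℤ) - s) ++
    List.replicate t 0 ++ (List.range p).map (fun s : ℕ => -((s : ℤ) + 1)) := by
  simp only [symBlock, List.bind_eq_flatMap, List.pure_def, ← List.map_eq_flatMap, List.map_map]
  rfl

lemma length_symBlock (p t : ℕ) : (symBlock p t).length = 2 * p + t := by
  simp only [symBlock_eq, List.length_append, List.length_map, List.length_range,
    List.length_replicate]
  omega

lemma getElem?_symBlock {p t l : ℕ} (hl : l < 2 * p + t) :
    (symBlock p t)[l]? =
      some (if l < p then (p : ℤ) - l else if l < p + t then 0 else (p : ℤ) + t - l - 1) := by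
  rw [symBlock_eq]
  by_cases h1 : l < p
  · rw [List.getElem?_append_left (by grind), List.getElem?_append_left (by grind)]
    simp [h1]
  by_cases h2 : l < p + t
  · rw [List.getElem?_append_left (by grind), List.getElem?_append_right (by grind)]
    rw [List.getElem?_replicate, if_pos (by grind), if_neg h1, if_pos h2]
  · rw [List.getElem?_append_right (by grind)]
    simp only [List.length_append, List.length_map, List.length_range, List.length_replicate,
      List.getElem?_map, List.getElem?_range (by omega : l - (p + t) < p), Option.map_some, h1, h2,
      if_false, Option.some.injEq]
    rw [Nat.cast_sub (by omega : p + t ≤ l)]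
    push_cast
    ring

theorem _root_.IsConcatSym.exists_pairs {H : List ℤ} (h : IsConcatSym H) :
    ∃ P : List (ℕ × ℕ), H = (P.map fun q => symBlock q.1 q.2).flatten := by
  obtain ⟨L, rfl, hL⟩ := h
  induction L with
  | nil => exact ⟨[], rfl⟩
  | cons B L ih =>
    obtain ⟨P, hP⟩ := ih fun B hB => hL B (List.mem_cons_of_mem _ hB)
    rcases hL B List.mem_cons_self with ⟨t, rfl⟩ | ⟨p, t, -, rfl⟩
    · exact ⟨(0, t) :: P, by simp [hP, symBlock]⟩
    · exact ⟨(p, t) :: P, by simp [hP]⟩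

theorem _root_.Fin.card_filter_le_and_lt {a b : ℕ} (hb : b ≤ n) :
    #{j : Fin n | a ≤ (j : ℕ) ∧ (j : ℕ) < b} = b - a := by
  rw [← card_map Fin.valEmbedding, ← Nat.card_Ico]
  congr 1
  ext x
  simp only [mem_map, mem_filter, mem_univ, true_and, Fin.valEmbedding_apply, mem_Ico]
  exact ⟨fun ⟨j, hj, hx⟩ => hx ▸ hj, fun hx => ⟨⟨x, by omega⟩, hx, rfl⟩⟩

def blockStair (n s p t : ℕ) : Finset (Fin n × Fin n) :=
  univ.filter fun u =>
    s ≤ (u.1 : ℕ) ∧ (u.1 : ℕ) < s + p ∧ (u.1 : ℕ) + p + t ≤ u.2 ∧ (u.2 : ℕ) < s + 2 * p + t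

/-- The upsets of the staircase tournament for the blocks `symBlock p t`, `(p, t) ∈ P`,
laid out from position `s` on. -/
def stair (n : ℕ) : ℕ → List (ℕ × ℕ) → Finset (Fin n × Fin n)
  | _, [] => ∅
  | s, (p, t) :: P => blockStair n s p t ∪ stair n (s + 2 * p + t) P

lemma le_and_lt_of_mem_stair {s : ℕ} {P : List (ℕ × ℕ)} {u : Fin n × Fin n} (hu : u ∈ stair n s P) :
    s ≤ (u.1 : ℕ) ∧ u.1 < u.2 := by
  induction P generalizing s with
  | nil => simp [stair] at hu
  | cons q P ih =>
    rcases mem_union.mp hu with hu | hu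
    · simp only [blockStair, mem_filter, mem_univ, true_and] at hu
      omega
    · have := ih hu
      omega

lemma rowCount_blockStair {s p t : ℕ} (hn : s + 2 * p + t ≤ n) (i : Fin n) :
    rowCount (blockStair n s p t) i = if s ≤ (i : ℕ) ∧ (i : ℕ) < s + p then s + p - i else 0 := by
  unfold rowCount
  split_ifs with hi
  · rw [show s + p - i = s + 2 * p + t - (i + p + t) by omega, ← Fin.card_filter_le_and_lt hn]
    congr 1
    ext j
    simp only [blockStair, mem_filter, mem_univ, true_and]
    omega
  · simp only [card_eq_zero, filter_eq_empty_iff, blockStair, mem_filter, mem_univ, true_and]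
    omega

lemma colCount_blockStair (s p t : ℕ) (j : Fin n) :
    colCount (blockStair n s p t) j =
      if s + p + t ≤ (j : ℕ) ∧ (j : ℕ) < s + 2 * p + t then j + 1 - (s + p + t) else 0 := by
  unfold colCount
  split_ifs with hj
  · rw [show (j : ℕ) + 1 - (s + p + t) = j + 1 - (p + t) - s by omega,
      ← Fin.card_filter_le_and_lt (n := n) (a := s) (b := j + 1 - (p + t)) (by omega)]
    congr 1
    ext i
    simp only [blockStair, mem_filter, mem_univ, true_and]
    omega
  · simp only [card_eq_zero, filter_eq_empty_iff, blockStair, mem_filter, mem_univ, true_and]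
    omega

lemma disjoint_blockStair_stair (s p t : ℕ) (P : List (ℕ × ℕ)) :
    Disjoint (blockStair n s p t) (stair n (s + 2 * p + t) P) := by
  refine disjoint_left.mpr fun u hu hu' => ?_
  have := le_and_lt_of_mem_stair hu'
  simp only [blockStair, mem_filter, mem_univ, true_and] at hu
  omega

lemma getElem?_symBlock_eq_rowCount_sub_colCount {s p t : ℕ} (hn : s + 2 * p + t ≤ n) (i : Fin n)
    (hs : s ≤ (i : ℕ)) (hi : (i : ℕ) < s + 2 * p + t) :
    (symBlock p t)[(i : ℕ) - s]? =
      some ((rowCount (blockStair n s p t) i : ℤ) - colCount (blockStair n s p t) i) := by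
  rw [getElem?_symBlock (by omega), Option.some.injEq, rowCount_blockStair hn, colCount_blockStair]
  split_ifs <;> push_cast <;> omega

lemma rowCount_stair_eq_zero {s : ℕ} {P : List (ℕ × ℕ)} {i : Fin n} (hi : (i : ℕ) < s) :
    rowCount (stair n s P) i = 0 :=
  card_eq_zero.mpr <| filter_eq_empty_iff.mpr fun j _ hj => by
    have := le_and_lt_of_mem_stair hj
    dsimp only at this
    omega

lemma colCount_stair_eq_zero {s : ℕ} {P : List (ℕ × ℕ)} {j : Fin n} (hj : (j : ℕ) < s) :
    colCount (stair n s P) j = 0 :=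
  card_eq_zero.mpr <| filter_eq_empty_iff.mpr fun i _ hi => by
    have := le_and_lt_of_mem_stair hi
    dsimp only at this
    omega

lemma rowCount_sub_colCount_stair {h : Fin n → ℤ} {P : List (ℕ × ℕ)} {s : ℕ}
    (hP : (List.ofFn h).drop s = (P.map fun q => symBlock q.1 q.2).flatten) (i : Fin n)
    (hi : s ≤ (i : ℕ)) : (rowCount (stair n s P) i : ℤ) - colCount (stair n s P) i = h i := by
  induction P generalizing s with
  | nil =>
    have := List.drop_eq_nil_iff.mp hP
    simp only [List.length_ofFn] at this
    omega
  | cons q P ih =>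
    obtain ⟨p, t⟩ := q
    simp only [List.map_cons, List.flatten_cons] at hP
    have hlen := congrArg List.length hP
    simp only [List.length_drop, List.length_ofFn, List.length_append, length_symBlock] at hlen
    have hn : s + 2 * p + t ≤ n := by omega
    simp only [stair, rowCount_union (disjoint_blockStair_stair s p t P),
      colCount_union (disjoint_blockStair_stair s p t P)]
    by_cases hie : (i : ℕ) < s + 2 * p + t
    · have hval : (symBlock p t)[(i : ℕ) - s]? = some (h i) := by
        rw [← List.getElem?_append_left (by rw [length_symBlock]; omega), ← hP,
          List.getElem?_drop, Nat.add_sub_cancel' hi, List.getElem?_ofFn, dif_pos i.isLt]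
      rw [getElem?_symBlock_eq_rowCount_sub_colCount hn i hi hie, Option.some.injEq] at hval
      rw [rowCount_stair_eq_zero hie, colCount_stair_eq_zero hie, ← hval]
      push_cast
      ring
    · have hdrop : (List.ofFn h).drop (s + 2 * p + t) =
          (P.map fun q => symBlock q.1 q.2).flatten := by
        rw [add_assoc, ← List.drop_drop, hP, List.drop_left' (length_symBlock p t)]
      rw [← ih hdrop (by omega), rowCount_blockStair hn, colCount_blockStair]
      split_ifs <;> omega

theorem _root_.Finset.inter_eq_of_card_add_le {α : Type*} [DecidableEq α] {X Y W R : Finset α}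
    (hX : X ⊆ W) (hY : Y ⊆ W) (hR : X ∩ Y ⊆ R) (h : #R + #W ≤ #X + #Y) : X ∩ Y = R := by
  refine eq_of_subset_of_card_le hR ?_
  have := card_inter_add_card_union X Y
  have := card_le_card (union_subset hX hY)
  omega

def rowBand (U : Finset (Fin n × Fin n)) (s e : ℕ) : Finset (Fin n × Fin n) :=
  U.filter fun u => s ≤ (u.1 : ℕ) ∧ (u.1 : ℕ) < e

lemma crossing_subset_rowBand {U : Finset (Fin n × Fin n)} {s e k : ℕ} (hs : crossing U s = ∅)
    (hsk : s ≤ k) (hke : k ≤ e) : crossing U k ⊆ rowBand U s e := by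
  intro u hu
  have hus : u ∉ crossing U s := by simp only [hs, notMem_empty, not_false_eq_true]
  simp only [crossing, rowBand, mem_filter, not_and] at hu hus ⊢
  exact ⟨hu.1, not_lt.mp fun h => hus hu.1 h (by omega), by omega⟩

lemma snd_lt_of_mem_rowBand {U : Finset (Fin n × Fin n)} {s e : ℕ} (he : crossing U e = ∅)
    {u : Fin n × Fin n} (hu : u ∈ rowBand U s e) : (u.2 : ℕ) < e := by
  have hue : u ∉ crossing U e := by simp only [he, notMem_empty, not_false_eq_true]
  simp only [crossing, rowBand, mem_filter, not_and] at hu hue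
  exact not_le.mp (hue hu.1 hu.2.2)

lemma crossing_blockStair_eq_empty {s p t k : ℕ} (hk : k ≤ s ∨ s + 2 * p + t ≤ k) :
    crossing (blockStair n s p t) k = ∅ :=
  filter_eq_empty_iff.mpr fun u hu => by
    simp only [blockStair, mem_filter, mem_univ, true_and] at hu
    omega

lemma crossing_blockStair_mid (s p t : ℕ) :
    crossing (blockStair n s p t) (s + p) = blockStair n s p t :=
  filter_true_of_mem fun u hu => by
    simp only [blockStair, mem_filter, mem_univ, true_and] at hu
    omega

lemma crossing_stair_eq_empty {s k : ℕ} {P : List (ℕ × ℕ)} (hk : k ≤ s) :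
    crossing (stair n s P) k = ∅ :=
  filter_eq_empty_iff.mpr fun u hu => by
    have := le_and_lt_of_mem_stair hu
    omega

lemma crossing_eq_empty_of_card_eq_blockStair {U : Finset (Fin n × Fin n)} {s p t k : ℕ}
    (h : #(crossing U k) = #(crossing (blockStair n s p t) k)) (hk : k ≤ s ∨ s + 2 * p + t ≤ k) :
    crossing U k = ∅ :=
  card_eq_zero.mp (h.trans (by rw [crossing_blockStair_eq_empty hk, card_empty]))

lemma card_blockStair_le {U : Finset (Fin n × Fin n)} {s p t : ℕ}
    (hcross : ∀ k, s ≤ k → k ≤ s + 2 * p + t →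
      #(crossing U k) = #(crossing (blockStair n s p t) k)) :
    #(blockStair n s p t) ≤ #(rowBand U s (s + 2 * p + t)) := by
  have hs := crossing_eq_empty_of_card_eq_blockStair (hcross s le_rfl (by omega)) (.inl le_rfl)
  rw [← crossing_blockStair_mid, ← hcross (s + p) (by omega) (by omega)]
  exact card_le_card (crossing_subset_rowBand hs (by omega) (by omega))

/-- Inclusion-exclusion: the upsets of the block in rows `< s + a + 1` and those in columns
`≥ s + p + t + a` meet in a rectangle, and both counts are the same for `U`. -/
lemma blockStair_subset_rowBand {U : Finset (Fin n × Fin n)} {s p t : ℕ}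
    (hcross : ∀ k, s ≤ k → k ≤ s + 2 * p + t →
      #(crossing U k) = #(crossing (blockStair n s p t) k))
    (hcard : #(rowBand U s (s + 2 * p + t)) ≤ #(blockStair n s p t)) :
    blockStair n s p t ⊆ rowBand U s (s + 2 * p + t) := by
  set S := blockStair n s p t
  have hs := crossing_eq_empty_of_card_eq_blockStair (hcross s le_rfl (by omega)) (.inl le_rfl)
  have he := crossing_eq_empty_of_card_eq_blockStair
    (hcross (s + 2 * p + t) (by omega) le_rfl) (.inr le_rfl)
  intro u hu
  have huS := hu
  simp only [S, blockStair, mem_filter, mem_univ, true_and] at huS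
  set a := (u.1 : ℕ) - s
  have hX := crossing_subset_rowBand hs (e := s + 2 * p + t) (k := s + a + 1) (by omega) (by omega)
  have hY :=
    crossing_subset_rowBand hs (e := s + 2 * p + t) (k := s + p + t + a) (by omega) (by omega)
  have hXY : crossing U (s + a + 1) ∩ crossing U (s + p + t + a) =
      crossing S (s + a + 1) ∩ crossing S (s + p + t + a) := by
    refine inter_eq_of_card_add_le hX hY (fun v hv => ?_) ?_
    · have := snd_lt_of_mem_rowBand he (hX (mem_inter.mp hv).1)
      have := hX (mem_inter.mp hv).1
      simp only [rowBand, crossing, S, blockStair, mem_inter, mem_filter, mem_univ,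
        true_and] at hv this ⊢
      omega
    · have hunion : crossing S (s + a + 1) ∪ crossing S (s + p + t + a) = S := by
        ext v
        simp only [S, crossing, blockStair, mem_union, mem_filter, mem_univ, true_and]
        omega
      have := card_inter_add_card_union (crossing S (s + a + 1)) (crossing S (s + p + t + a))
      rw [hunion] at this
      rw [hcross _ (by omega) (by omega), hcross _ (by omega) (by omega)]
      omega
  have huXY : u ∈ crossing S (s + a + 1) ∩ crossing S (s + p + t + a) := by
    simp only [S, crossing, blockStair, mem_inter, mem_filter, mem_univ, true_and]
    omega
  exact hX (mem_inter.mp (hXY ▸ huXY)).1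

lemma stair_card_le_and_eq {U : Finset (Fin n × Fin n)} (P : List (ℕ × ℕ)) {s : ℕ}
    (hcross : ∀ k, s ≤ k → #(crossing U k) = #(crossing (stair n s P) k)) :
    #(stair n s P) ≤ #(rowBand U s n) ∧
      (#(rowBand U s n) ≤ #(stair n s P) → rowBand U s n = stair n s P) := by
  induction P generalizing s with
  | nil => exact ⟨by simp only [stair, card_empty, zero_le], fun h => by simpa [stair] using h⟩
  | cons q P ih =>
    obtain ⟨p, t⟩ := q
    have hsplit : ∀ k, crossing (stair n s ((p, t) :: P)) k =
        crossing (blockStair n s p t) k ∪ crossing (stair n (s + 2 * p + t) P) k :=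
      fun k => filter_union _ _ _
    have hblock : ∀ k, s ≤ k → k ≤ s + 2 * p + t →
        #(crossing U k) = #(crossing (blockStair n s p t) k) := fun k hsk hke => by
      rw [hcross k hsk, hsplit, crossing_stair_eq_empty hke, union_empty]
    have htail := ih (s := s + 2 * p + t) fun k hk => by
      rw [hcross k (by omega), hsplit, crossing_blockStair_eq_empty (.inr hk), empty_union]
    have hband : rowBand U s n = rowBand U s (s + 2 * p + t) ∪ rowBand U (s + 2 * p + t) n := by
      simp only [rowBand, ← filter_or]
      exact filter_congr fun u _ => by have := u.1.isLt; omega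
    have hband_disj : Disjoint (rowBand U s (s + 2 * p + t)) (rowBand U (s + 2 * p + t) n) :=
      disjoint_filter.mpr fun u _ h1 h2 => by omega
    have hle := card_blockStair_le hblock
    simp only [stair, hband, card_union_of_disjoint hband_disj,
      card_union_of_disjoint (disjoint_blockStair_stair s p t P)]
    refine ⟨by omega, fun h => ?_⟩
    rw [← eq_of_subset_of_card_le (blockStair_subset_rowBand hblock (by omega)) (by omega),
      htail.2 (by omega)]

lemma card_stair_le_upsets_and_eq {A B : Fin n → Fin n → ℤ} {P : List (ℕ × ℕ)}
    (hA : IsTournament A) (hB : IsTournament B) (hscore : ∀ i, ∑ j, B i j = ∑ j, A i j)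
    (hAS : upsetSet A = stair n 0 P) :
    #(stair n 0 P) ≤ upsets B ∧ (upsets B ≤ #(stair n 0 P) → B = A) := by
  have hband : rowBand (upsetSet B) 0 n = upsetSet B :=
    filter_true_of_mem fun u _ => ⟨Nat.zero_le _, u.1.isLt⟩
  obtain ⟨hle, heq⟩ := stair_card_le_and_eq (U := upsetSet B) P fun k _ =>
    hAS ▸ hB.card_crossing_eq hA hscore k
  rw [hband] at hle heq
  exact ⟨hle, fun h => hB.ext_of_upsetSet_eq hA ((heq h).trans hAS.symm)⟩

end Tournament

open Tournament

theorem uminUnique_of_concatSym_general (n : ℕ) (r : Fin n → ℤ)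
    (hsym : IsConcatSym (normalized n r)) :
    UminUnique r := by
  obtain ⟨P, hP⟩ := hsym.exists_pairs
  have hlt : ∀ u ∈ stair n 0 P, u.1 < u.2 := fun u hu => (le_and_lt_of_mem_stair hu).2
  set A := ofUpsets (stair n 0 P)
  have hA : IsTournament A := isTournament_ofUpsets _
  have hAS : upsetSet A = stair n 0 P := upsetSet_ofUpsets hlt
  have hAr : ∀ i, ∑ j, A i j = r i := fun i => by
    rw [sum_ofUpsets hlt, add_sub_assoc, rowCount_sub_colCount_stair (h := fun i => r i - (i : ℕ))
      (by simpa [normalized] using hP) i (Nat.zero_le _)]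
    ring
  have key : ∀ B, IsTournament B → (∀ i, ∑ j, B i j = r i) →
      #(stair n 0 P) ≤ upsets B ∧ (upsets B ≤ #(stair n 0 P) → B = A) := fun B hB hBr =>
    card_stair_le_upsets_and_eq hA hB (fun i => (hBr i).trans (hAr i).symm) hAS
  refine ⟨A, ⟨hA, hAr, fun B hB hBr => ?_⟩, fun B ⟨hB, hBr, hmin⟩ => ?_⟩
  · rw [upsets_eq_card, hAS]
    exact (key B hB hBr).1
  · exact (key B hB hBr).2 (by rw [← hAS, ← upsets_eq_card]; exact hmin A hA hAr)

/-- If the normalized score vector of a feasible score sequence `r` is a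
concatenation of symmetric vectors, then there is exactly one tournament
matrix with score sequence `r` having the minimum number of upsets. -/
theorem uminUnique_of_concatSym (n : ℕ) (r : Fin n → ℤ)
    (hR : IsFeasible n r) (hsym : IsConcatSym (normalized n r)) :
    UminUnique r :=
  uminUnique_of_concatSym_general n r hsym
end

section
/- Define a_0 = 1 and for n ≥ 1, a_n = a_{n-1} + sum over p from 1 to floor((n-1)/2) of sum over i from 1 to n-2p of a_{n-2p-i}. Then a_n satisfies the linear recurrence a_{n+3} - 2a_{n+2} + a_n - a_{n-1} = 0 for all n ≥ 1. -/
lemma sum_Icc_one (f : ℕ → ℤ) (k : ℕ) :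
    ∑ i ∈ Finset.Icc 1 k, f i = ∑ i ∈ Finset.range k, f (1 + i) := by
  rw [← Finset.Ico_add_one_right_eq_Icc, Finset.sum_Ico_eq_sum_range]
  simp

/-- If `a 0 = 1` and for `n ≥ 1`,
`a n = a (n-1) + ∑_{p=1}^{⌊(n-1)/2⌋} ∑_{i=1}^{n-2p} a (n-2p-i)`,
then `a` satisfies the linear recurrence
`a (n+3) - 2 a (n+2) + a n - a (n-1) = 0` for all `n ≥ 1`. -/
theorem double_sum_recursion_linearizes (a : ℕ → ℤ) (h0 : a 0 = 1)
    (hrec : ∀ n : ℕ, 1 ≤ n →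
      a n = a (n - 1) +
        ∑ p ∈ Finset.Icc 1 ((n - 1) / 2), ∑ i ∈ Finset.Icc 1 (n - 2 * p),
          a (n - 2 * p - i)) :
    ∀ n : ℕ, 1 ≤ n → a (n + 3) - 2 * a (n + 2) + a n - a (n - 1) = 0 := by
  have key : ∀ n : ℕ, 1 ≤ n →
      a (n + 2) = a (n + 1) + (a n - a (n - 1)) + ∑ j ∈ Finset.range n, a j := by
    intro n hn
    have h1 := hrec n hn
    have h2 := hrec (n + 2) (by omega)
    have e1 : n + 2 - 1 = n + 1 := by omega
    have e2 : (n + 1) / 2 = (n - 1) / 2 + 1 := by omega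
    rw [e1, e2] at h2
    rw [sum_Icc_one, Finset.sum_range_succ'] at h2
    -- first (p' = 0, i.e. p = 1) term of the shifted sum
    have hfirst : ∑ i ∈ Finset.Icc 1 (n + 2 - 2 * (1 + 0)), a (n + 2 - 2 * (1 + 0) - i)
        = ∑ j ∈ Finset.range n, a j := by
      have e3 : n + 2 - 2 * (1 + 0) = n := by omega
      rw [e3, sum_Icc_one]
      rw [← Finset.sum_range_reflect (fun j => a j) n]
      apply Finset.sum_congr rfl
      intro i hi
      congr 1
      simp only [Finset.mem_range] at hi
      omega
    rw [hfirst] at h2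
    have hmain : ∑ p ∈ Finset.range ((n - 1) / 2),
        ∑ i ∈ Finset.Icc 1 (n + 2 - 2 * (1 + (p + 1))), a (n + 2 - 2 * (1 + (p + 1)) - i)
        = ∑ p ∈ Finset.Icc 1 ((n - 1) / 2), ∑ i ∈ Finset.Icc 1 (n - 2 * p),
            a (n - 2 * p - i) := by
      rw [sum_Icc_one (fun p => ∑ i ∈ Finset.Icc 1 (n - 2 * p), a (n - 2 * p - i))]
      apply Finset.sum_congr rfl
      intro p _
      have e4 : n + 2 - 2 * (1 + (p + 1)) = n - 2 * (1 + p) := by omega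
      rw [e4]
    rw [hmain] at h2
    have : ∑ p ∈ Finset.Icc 1 ((n - 1) / 2), ∑ i ∈ Finset.Icc 1 (n - 2 * p),
        a (n - 2 * p - i) = a n - a (n - 1) := by linarith
    rw [h2, this]
    ring
  intro n hn
  have k1 := key n hn
  have k2 := key (n + 1) (by omega)
  rw [Finset.sum_range_succ] at k2
  have e5 : n + 1 - 1 = n := by omega
  rw [e5] at k2
  have e6 : n + 1 + 2 = n + 3 := by omega
  have e7 : n + 1 + 1 = n + 2 := by omega
  rw [e6, e7] at k2
  linarith
end

section
/- Let R = (r_1,...,r_n) be a feasible score sequence with normalized score vector h_i = r_i - (i-1). Suppose h_{k_1}, ..., h_{k_t} is a maximal run of negative entries with minimum value -q, and the positive entries preceding index k_1 are h_{i_1}, ..., h_{i_q} (exactly q of them). If these q positive values are not pairwise distinct, then their maximum p satisfies p < q, and h_{i_1} + ... + h_{i_q} < q(q+1)/2, yielding sum_{i=1}^{k_t} h_i < 0, contradicting the Landau conditions. Hence the q positive entries preceding a maximal negative run reaching depth -q must be the q distinct values q, q-1, ..., 1. -/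
lemma sum_filter_lt_eq {n k : ℕ} (hk : k ≤ n) (f : Fin n → ℤ) (g : ℕ → ℤ)
    (hg : ∀ i : Fin n, g i = f i) :
    ∑ i ∈ Finset.univ.filter (fun i : Fin n => (i : ℕ) < k), f i
      = ∑ m ∈ Finset.range k, g m := by
  rw [Finset.sum_filter]
  have h1 : ∀ i : Fin n, (if (i : ℕ) < k then f i else 0)
      = (if (i : ℕ) < k then g (i : ℕ) else 0) := by
    intro i; simp [hg]
  calc ∑ i : Fin n, (if (i : ℕ) < k then f i else 0)
      = ∑ i : Fin n, (if (i : ℕ) < k then g (i : ℕ) else 0) :=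
        Finset.sum_congr rfl (fun i _ => h1 i)
    _ = ∑ m ∈ Finset.range n, (if m < k then g m else 0) :=
        Fin.sum_univ_eq_sum_range (fun m => if m < k then g m else 0) n
    _ = ∑ m ∈ Finset.range k, g m := by
        rw [← Finset.sum_filter]
        congr 1
        ext m
        simp only [Finset.mem_filter, Finset.mem_range]
        omega

/-- Let `h` be the normalized score vector of a feasible score sequence, let
`h k₁, ..., h kₜ` be the first maximal run of negative entries, with minimum
value `-q`, and suppose exactly `q` entries before index `k₁` are positive.
Then these `q` positive entries take exactly the pairwise distinct values
`q, q-1, ..., 1`. -/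
theorem positive_entries_distinct (n : ℕ) (r : Fin n → ℤ)
    (hR : IsFeasible n r) (h : Fin n → ℤ) (hh : ∀ i, h i = r i - (i : ℕ))
    (k₁ kt : Fin n) (hkk : k₁ ≤ kt)
    (hrun : ∀ j : Fin n, k₁ ≤ j → j ≤ kt → h j < 0)
    (hfirst : ∀ i : Fin n, i < k₁ → 0 ≤ h i)
    (hmax : ∀ j : Fin n, (j : ℕ) = (kt : ℕ) + 1 → 0 ≤ h j)
    (q : ℕ) (hq : 0 < q)
    (hmin₁ : ∃ j : Fin n, k₁ ≤ j ∧ j ≤ kt ∧ h j = -(q : ℤ))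
    (hmin₂ : ∀ j : Fin n, k₁ ≤ j → j ≤ kt → -(q : ℤ) ≤ h j)
    (S : Finset (Fin n))
    (hS : S = Finset.univ.filter (fun i : Fin n => i < k₁ ∧ 0 < h i))
    (hcard : S.card = q) :
    S.image h = Finset.Icc (1 : ℤ) (q : ℤ) ∧ Set.InjOn h S := by
  obtain ⟨hmono, -, hlandau⟩ := hR
  have hkk' : (k₁ : ℕ) ≤ (kt : ℕ) := hkk
  -- single step: h decreases by at most 1
  have hstep : ∀ (i : Fin n) (hi : (i : ℕ) + 1 < n), h i - 1 ≤ h ⟨(i : ℕ) + 1, hi⟩ := by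
    intro i hi
    have hm := hmono (a := i) (b := ⟨(i : ℕ) + 1, hi⟩) (by simp [Fin.le_def])
    rw [hh, hh]
    push_cast
    linarith
  -- attainment lemma (downward intermediate value)
  have hA : ∀ (d : ℕ) (a b : Fin n), a ≤ b → (b : ℕ) - (a : ℕ) = d →
      ∀ c : ℤ, h b ≤ c → c ≤ h a → ∃ j : Fin n, a ≤ j ∧ j ≤ b ∧ h j = c := by
    intro d
    induction d with
    | zero =>
      intro a b hab hd c h1 h2
      have hab2 : (a : ℕ) ≤ (b : ℕ) := hab
      have : a = b := by apply Fin.ext; omega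
      subst this
      exact ⟨a, le_refl _, le_refl _, le_antisymm h1 h2⟩
    | succ d ih =>
      intro a b hab hd c h1 h2
      by_cases hc : h a = c
      · exact ⟨a, le_refl _, hab, hc⟩
      · have hab' : (a : ℕ) + 1 ≤ (b : ℕ) := by omega
        have hi : (a : ℕ) + 1 < n := lt_of_le_of_lt hab' b.isLt
        have h2' : c ≤ h ⟨(a : ℕ) + 1, hi⟩ := by
          have hs := hstep a hi
          have : c ≤ h a - 1 := by
            rcases lt_or_eq_of_le h2 with h' | h'
            · linarith
            · exact absurd h'.symm hc
          linarith
        obtain ⟨j, hj1, hj2, hj3⟩ := ih ⟨(a : ℕ) + 1, hi⟩ b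
          (by rw [Fin.le_def]; simpa using hab') (by simp; omega) c h1 h2'
        refine ⟨j, le_trans ?_ hj1, hj2, hj3⟩
        rw [Fin.le_def]; simp
  -- nonnegativity of prefix sums of h
  have hP : ∀ k : ℕ, k ≤ n →
      0 ≤ ∑ i ∈ Finset.univ.filter (fun i : Fin n => (i : ℕ) < k), h i := by
    intro k hk
    have hL := hlandau k hk
    have hch : ∑ i ∈ Finset.univ.filter (fun i : Fin n => (i : ℕ) < k), ((i : ℕ) : ℤ)
        = (k.choose 2 : ℤ) := by
      rw [sum_filter_lt_eq hk _ (fun m => (m : ℤ)) (fun i => rfl)]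
      have h2 := Finset.sum_range_id_mul_two k
      have hc : k.choose 2 = k * (k - 1) / 2 := Nat.choose_two_right k
      have hsn : (∑ m ∈ Finset.range k, m) = k.choose 2 := by omega
      rw [← hsn]
      push_cast
      rfl
    have hsplit : ∑ i ∈ Finset.univ.filter (fun i : Fin n => (i : ℕ) < k), h i
        = (∑ i ∈ Finset.univ.filter (fun i : Fin n => (i : ℕ) < k), r i)
          - ∑ i ∈ Finset.univ.filter (fun i : Fin n => (i : ℕ) < k), ((i : ℕ) : ℤ) := by
      rw [← Finset.sum_sub_distrib]
      exact Finset.sum_congr rfl (fun i _ => hh i)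
    rw [hsplit, hch]
    linarith
  -- h k₁ = -1
  have hk1neg : h k₁ < 0 := hrun k₁ (le_refl _) hkk
  have hk1pos : 0 < (k₁ : ℕ) := by
    by_contra h0
    have hk10 : (k₁ : ℕ) = 0 := by omega
    have h1 := hP 1 (by omega)
    have : Finset.univ.filter (fun i : Fin n => (i : ℕ) < 1) = {k₁} := by
      ext i
      simp only [Finset.mem_filter, Finset.mem_univ, true_and, Finset.mem_singleton]
      constructor
      · intro hi; apply Fin.ext; omega
      · intro hi; subst hi; omega
    rw [this, Finset.sum_singleton] at h1
    linarith
  have hhk1 : h k₁ = -1 := by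
    have hi0 : (k₁ : ℕ) - 1 + 1 < n := by
      have := k₁.isLt; omega
    have hs := hstep ⟨(k₁ : ℕ) - 1, by omega⟩ hi0
    have he : (⟨(k₁ : ℕ) - 1 + 1, hi0⟩ : Fin n) = k₁ := by apply Fin.ext; simp; omega
    rw [he] at hs
    have hf := hfirst ⟨(k₁ : ℕ) - 1, by omega⟩ (by rw [Fin.lt_def]; simp; omega)
    omega
  -- the run minimum witness
  obtain ⟨js, hjs1, hjs2, hjs3⟩ := hmin₁
  -- attained values -1, ..., -q in the run
  have hattain : ∀ c : ℤ, ∃ j : Fin n,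
      (1 ≤ c ∧ c ≤ (q : ℤ)) → (k₁ ≤ j ∧ j ≤ js ∧ h j = -c) := by
    intro c
    by_cases hc : 1 ≤ c ∧ c ≤ (q : ℤ)
    · obtain ⟨j, hj1, hj2, hj3⟩ := hA ((js : ℕ) - (k₁ : ℕ)) k₁ js hjs1 rfl (-c)
        (by rw [hjs3]; omega) (by rw [hhk1]; omega)
      exact ⟨j, fun _ => ⟨hj1, hj2, hj3⟩⟩
    · exact ⟨k₁, fun hc' => absurd hc' hc⟩
  choose f hf using hattain
  -- run set and its sum bound
  set Run : Finset (Fin n) :=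
    Finset.univ.filter (fun i : Fin n => (k₁ : ℕ) ≤ (i : ℕ) ∧ (i : ℕ) ≤ (kt : ℕ)) with hRun
  have hrun' : ∀ i ∈ Run, h i < 0 := by
    intro i hi
    rw [hRun, Finset.mem_filter] at hi
    exact hrun i hi.2.1 hi.2.2
  set T : Finset (Fin n) := (Finset.Icc (1 : ℤ) (q : ℤ)).image f with hT
  have hmemIcc : ∀ c ∈ Finset.Icc (1 : ℤ) (q : ℤ), k₁ ≤ f c ∧ f c ≤ js ∧ h (f c) = -c := by
    intro c hc
    rw [Finset.mem_Icc] at hc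
    exact hf c hc
  have hTsub : T ⊆ Run := by
    intro j hj
    rw [hT, Finset.mem_image] at hj
    obtain ⟨c, hc, rfl⟩ := hj
    obtain ⟨h1, h2, _⟩ := hmemIcc c hc
    rw [hRun, Finset.mem_filter]
    refine ⟨Finset.mem_univ _, h1, le_trans h2 hjs2⟩
  have hfinj : ∀ x ∈ Finset.Icc (1 : ℤ) (q : ℤ), ∀ y ∈ Finset.Icc (1 : ℤ) (q : ℤ),
      f x = f y → x = y := by
    intro x hx y hy hxy
    have h1 := (hmemIcc x hx).2.2
    have h2 := (hmemIcc y hy).2.2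
    rw [hxy] at h1
    rw [h2] at h1
    linarith
  have hTsum : ∑ j ∈ T, h j = -∑ c ∈ Finset.Icc (1 : ℤ) (q : ℤ), c := by
    rw [hT, Finset.sum_image hfinj, ← Finset.sum_neg_distrib]
    exact Finset.sum_congr rfl (fun c hc => (hmemIcc c hc).2.2)
  have hRunle : ∑ j ∈ Run, h j ≤ -∑ c ∈ Finset.Icc (1 : ℤ) (q : ℤ), c := by
    rw [← hTsum, ← Finset.sum_sdiff hTsub]
    have : ∑ j ∈ Run \ T, h j ≤ 0 :=
      Finset.sum_nonpos (fun j hj => le_of_lt (hrun' j (Finset.mem_sdiff.mp hj).1))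
    linarith
  -- split the prefix sum up to kt
  set A : Finset (Fin n) :=
    Finset.univ.filter (fun i : Fin n => (i : ℕ) < (k₁ : ℕ)) with hAdef
  have hsplit2 : ∑ i ∈ Finset.univ.filter (fun i : Fin n => (i : ℕ) < (kt : ℕ) + 1), h i
      = ∑ i ∈ A, h i + ∑ i ∈ Run, h i := by
    have hun : Finset.univ.filter (fun i : Fin n => (i : ℕ) < (kt : ℕ) + 1) = A ∪ Run := by
      ext i
      simp only [hAdef, hRun, Finset.mem_filter, Finset.mem_univ, true_and, Finset.mem_union]
      omega
    have hdis : Disjoint A Run := by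
      rw [Finset.disjoint_left]
      intro i hi hi'
      rw [hAdef, Finset.mem_filter] at hi
      rw [hRun, Finset.mem_filter] at hi'
      omega
    rw [hun, Finset.sum_union hdis]
  have hAS : ∑ i ∈ A, h i = ∑ i ∈ S, h i := by
    have hsub : S ⊆ A := by
      intro i hi
      rw [hS, Finset.mem_filter] at hi
      rw [hAdef, Finset.mem_filter]
      exact ⟨Finset.mem_univ _, hi.2.1⟩
    rw [← Finset.sum_sdiff hsub]
    have hz : ∑ i ∈ A \ S, h i = 0 := by
      apply Finset.sum_eq_zero
      intro i hi
      rw [Finset.mem_sdiff, hAdef, Finset.mem_filter, hS, Finset.mem_filter] at hi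
      obtain ⟨⟨-, h1⟩, h2⟩ := hi
      have hlt : i < k₁ := h1
      have := hfirst i hlt
      simp only [Finset.mem_univ, true_and, not_and] at h2
      have := h2 hlt
      omega
    linarith
  -- lower bound for the sum over S
  have hSlb : ∑ c ∈ Finset.Icc (1 : ℤ) (q : ℤ), c ≤ ∑ i ∈ S, h i := by
    have h0 := hP ((kt : ℕ) + 1) kt.isLt
    rw [hsplit2, hAS] at h0
    linarith
  -- the counting function
  set cf : Fin n → ℤ := fun i => ((S.filter (fun i' => i ≤ i')).card : ℤ) with hcf
  have hC : ∀ (d : ℕ) (i : Fin n), i ≤ k₁ → (k₁ : ℕ) - (i : ℕ) = d → h i ≤ cf i := by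
    intro d
    induction d with
    | zero =>
      intro i hik hd
      have hik' : (i : ℕ) ≤ (k₁ : ℕ) := hik
      have : i = k₁ := by apply Fin.ext; omega
      subst this
      have : (0 : ℤ) ≤ cf i := by simp only [hcf]; exact Int.natCast_nonneg _
      linarith
    | succ d ih =>
      intro i hik hd
      by_cases hiS : i ∈ S
      · have hi1 : (i : ℕ) + 1 < n := by
          have := k₁.isLt; omega
        set i' : Fin n := ⟨(i : ℕ) + 1, hi1⟩ with hi'
        have hstep' := hstep i hi1
        have hih := ih i' (by rw [Fin.le_def]; simp [hi']; omega) (by simp [hi']; omega)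
        have hcard' : cf i' + 1 ≤ cf i := by
          have hsub : insert i (S.filter (fun x => i' ≤ x)) ⊆ S.filter (fun x => i ≤ x) := by
            intro x hx
            rcases Finset.mem_insert.mp hx with rfl | hx'
            · exact Finset.mem_filter.mpr ⟨hiS, le_refl _⟩
            · rw [Finset.mem_filter] at hx' ⊢
              refine ⟨hx'.1, ?_⟩
              have : (i' : ℕ) ≤ (x : ℕ) := hx'.2
              rw [Fin.le_def]
              simp [hi'] at this
              omega
          have hni : i ∉ S.filter (fun x => i' ≤ x) := by
            rw [Finset.mem_filter]
            rintro ⟨-, hle⟩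
            have : (i' : ℕ) ≤ (i : ℕ) := hle
            simp [hi'] at this
          have := Finset.card_le_card hsub
          rw [Finset.card_insert_of_notMem hni] at this
          simp only [hcf]
          exact_mod_cast this
        linarith
      · have hilt : i < k₁ := by
          rw [Fin.lt_def]; omega
        have h1 := hfirst i hilt
        have h2 : ¬ 0 < h i := by
          intro hpos
          exact hiS (by rw [hS, Finset.mem_filter]; exact ⟨Finset.mem_univ _, hilt, hpos⟩)
        have h3 : h i ≤ 0 := not_lt.mp h2
        have h4 : (0 : ℤ) ≤ cf i := by simp only [hcf]; exact Int.natCast_nonneg _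
        linarith
  -- termwise bound on S
  have hSub : ∀ i ∈ S, h i ≤ cf i := by
    intro i hi
    rw [hS, Finset.mem_filter] at hi
    have : i ≤ k₁ := le_of_lt hi.2.1
    exact hC ((k₁ : ℕ) - (i : ℕ)) i this rfl
  -- cf is injective on S with image Icc 1 q
  have hcbound : ∀ i ∈ S, cf i ∈ Finset.Icc (1 : ℤ) (q : ℤ) := by
    intro i hi
    rw [Finset.mem_Icc]
    constructor
    · have : i ∈ S.filter (fun x => i ≤ x) := Finset.mem_filter.mpr ⟨hi, le_refl _⟩
      have := Finset.card_pos.mpr ⟨i, this⟩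
      simp only [hcf]
      simpa using this
    · have : (S.filter (fun x => i ≤ x)).card ≤ S.card :=
        Finset.card_le_card (Finset.filter_subset _ _)
      have h2 : (S.filter (fun x => i ≤ x)).card ≤ q := hcard ▸ this
      simp only [hcf]
      exact_mod_cast h2
  have hcinj : ∀ x ∈ S, ∀ y ∈ S, cf x = cf y → x = y := by
    have key : ∀ x ∈ S, ∀ y ∈ S, x < y → cf y < cf x := by
      intro x hx y hy hxy
      have hsub : S.filter (fun z => y ≤ z) ⊆ S.filter (fun z => x ≤ z) := by
        intro z hz
        rw [Finset.mem_filter] at hz ⊢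
        exact ⟨hz.1, le_trans (le_of_lt hxy) hz.2⟩
      have hmem : x ∈ S.filter (fun z => x ≤ z) := Finset.mem_filter.mpr ⟨hx, le_refl _⟩
      have hnmem : x ∉ S.filter (fun z => y ≤ z) := by
        rw [Finset.mem_filter]
        rintro ⟨-, hle⟩
        exact absurd (lt_of_lt_of_le hxy hle) (lt_irrefl x)
      have : (S.filter (fun z => y ≤ z)).card < (S.filter (fun z => x ≤ z)).card :=
        Finset.card_lt_card ⟨hsub, fun hcon => hnmem (hcon hmem)⟩
      simp only [hcf]
      simpa using this
    intro x hx y hy hxy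
    rcases lt_trichotomy x y with hlt | heq | hgt
    · exact absurd hxy (ne_of_gt (key x hx y hy hlt))
    · exact heq
    · exact absurd hxy (ne_of_lt (key y hy x hx hgt))
  have himage : S.image cf = Finset.Icc (1 : ℤ) (q : ℤ) := by
    apply Finset.eq_of_subset_of_card_le
    · intro v hv
      rw [Finset.mem_image] at hv
      obtain ⟨i, hi, rfl⟩ := hv
      exact hcbound i hi
    · rw [Finset.card_image_of_injOn (fun x hx y hy => hcinj x hx y hy), hcard, Int.card_Icc]
      simp
  have hsumcf : ∑ i ∈ S, cf i = ∑ c ∈ Finset.Icc (1 : ℤ) (q : ℤ), c := by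
    rw [← himage, Finset.sum_image hcinj]
  -- equality everywhere
  have hsumeq : ∑ i ∈ S, h i = ∑ i ∈ S, cf i := by
    have h1 : ∑ i ∈ S, h i ≤ ∑ i ∈ S, cf i := Finset.sum_le_sum hSub
    rw [hsumcf]
    linarith
  have heq : ∀ i ∈ S, h i = cf i := by
    have := (Finset.sum_eq_sum_iff_of_le hSub).mp hsumeq
    intro i hi
    exact (this i hi)
  constructor
  · rw [← himage]
    exact Finset.image_congr (fun i hi => heq i hi)
  · intro x hx y hy hxy
    rw [Finset.mem_coe] at hx hy
    rw [heq x hx, heq y hy] at hxy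
    exact hcinj x hx y hy hxy
end

section
/- Let c_1, c_2, c_3, c_4 be the unique complex numbers satisfying the linear system c_1λ_1^k + c_2λ_2^k + c_3λ_3^k + c_4λ_4^k = a_k for k = 1,2,3,4 with a_1=1, a_2=1, a_3=2, a_4=4, where λ_1 = (1-√(2√5+3))/2, λ_2 = (1+√(2√5+3))/2, λ_3 = (1-i√(2√5-3))/2, λ_4 = (1+i√(2√5-3))/2. Then c_1λ_1 = ((√5+1)/4)(1/√5 - 1/√(2√5+3)), c_2λ_2 = ((√5+1)/4)(1/√5 + 1/√(2√5+3)), c_3λ_3 = ((√5-1)/4)(1/√5 - i/√(2√5-3)), and c_4λ_4 = ((√5-1)/4)(1/√5 + i/√(2√5-3)). -/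
/-!
Put `x_j = c_j λ_j`, so that the system prescribes the power sums `∑ x_j λ_j ^ k` for
`k = 0, 1, 2, 3`. If `q(x, y) = (p(x) - p(y)) / (x - y)` is the divided difference of
`p = x⁴ - 2x³ + x - 1`, then `q(λ_j, λ_i) = 0` for `j ≠ i` and `q(λ_i, λ_i) = p'(λ_i)`, so
expanding `∑ x_j q(λ_j, λ_i)` in powers of `λ_j` gives `x_i p'(λ_i) = λ_i³ - λ_i² + 1`.

Writing a root as `λ = (1 - u) / 2` with `s² = 5` and `u² = 2s + 3` gives `λ² - λ = (1 + s) / 2`,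
which reduces `p'(λ)` to `-su` and `λ³ - λ² + 1` to `(s + 1)(s - u) / 4`; the quotient is the
claimed value, uniformly in the four choices of `(s, u)`.
-/

section DividedDifference

variable {R : Type*} [CommRing R]

def quarticDivDiff (b c d x y : R) : R :=
  x ^ 3 + (y + b) * x ^ 2 + (y ^ 2 + b * y + c) * x + (y ^ 3 + b * y ^ 2 + c * y + d)

theorem sub_mul_quarticDivDiff (b c d e x y : R) :
    (x - y) * quarticDivDiff b c d x y =
      (x ^ 4 + b * x ^ 3 + c * x ^ 2 + d * x + e) -
        (y ^ 4 + b * y ^ 3 + c * y ^ 2 + d * y + e) := by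
  unfold quarticDivDiff; ring

theorem quarticDivDiff_self (b c d x : R) :
    quarticDivDiff b c d x x = 4 * x ^ 3 + 3 * b * x ^ 2 + 2 * c * x + d := by
  unfold quarticDivDiff; ring

theorem quarticDivDiff_eq_zero [IsDomain R] {b c d e x y : R}
    (hx : x ^ 4 + b * x ^ 3 + c * x ^ 2 + d * x + e = 0)
    (hy : y ^ 4 + b * y ^ 3 + c * y ^ 2 + d * y + e = 0) (hxy : x ≠ y) :
    quarticDivDiff b c d x y = 0 := by
  have h := sub_mul_quarticDivDiff b c d e x y
  rw [hx, hy, sub_self] at h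
  exact (mul_eq_zero.mp h).resolve_left (sub_ne_zero.mpr hxy)

theorem mul_quartic_deriv_eq_moments [IsDomain R] {ι : Type*} [Fintype ι] {b c d e : R}
    {w l : ι → R} (hl : Function.Injective l)
    (hroot : ∀ i, l i ^ 4 + b * l i ^ 3 + c * l i ^ 2 + d * l i + e = 0) (i : ι) :
    w i * (4 * l i ^ 3 + 3 * b * l i ^ 2 + 2 * c * l i + d) =
      ∑ j, w j * l j ^ 3 + (l i + b) * ∑ j, w j * l j ^ 2 +
        (l i ^ 2 + b * l i + c) * ∑ j, w j * l j +
          (l i ^ 3 + b * l i ^ 2 + c * l i + d) * ∑ j, w j := by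
  calc w i * (4 * l i ^ 3 + 3 * b * l i ^ 2 + 2 * c * l i + d)
      = ∑ j, w j * quarticDivDiff b c d (l j) (l i) := by
        rw [Finset.sum_eq_single i, quarticDivDiff_self]
        · intro j _ hji
          rw [quarticDivDiff_eq_zero (hroot j) (hroot i) (hl.ne hji), mul_zero]
        · exact fun hi => absurd (Finset.mem_univ i) hi
    _ = _ := by
        simp only [Finset.mul_sum, ← Finset.sum_add_distrib]
        exact Finset.sum_congr rfl fun j _ => by unfold quarticDivDiff; ring

end DividedDifference

section RootParametrization

variable {K : Type*} [Field K] {s u v l w : K}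

/-- The roots of `x⁴ - 2x³ + x - 1` are the numbers `(1 - u) / 2` for the four solutions `(s, u)`:
`λ₁, λ₂` come from `s = √5, u = ±√(2√5 + 3)` and `λ₃, λ₄` from `s = -√5, u = ±i√(2√5 - 3)`. -/
def IsRootParam (s u : K) : Prop := s ^ 2 = 5 ∧ u ^ 2 = 2 * s + 3

namespace IsRootParam

theorem neg (h : IsRootParam s u) : IsRootParam s (-u) := ⟨h.1, by rw [neg_sq]; exact h.2⟩

variable [CharZero K]

theorem left_ne_zero (h : IsRootParam s u) : s ≠ 0 := by
  rintro rfl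
  have h5 := h.1
  norm_num at h5

theorem right_ne_zero (h : IsRootParam s u) : u ≠ 0 := by
  rintro rfl
  have : (11 : K) = 0 := by linear_combination -4 * h.1 - (2 * s - 3) * h.2
  norm_num at this

theorem sq_sub_self (h : IsRootParam s u) (hl : l = (1 - u) / 2) : l ^ 2 - l = (1 + s) / 2 := by
  subst hl; linear_combination h.2 / 4

theorem quartic_eq_zero (h : IsRootParam s u) (hl : l = (1 - u) / 2) :
    l ^ 4 - 2 * l ^ 3 + l - 1 = 0 := by
  linear_combination (l ^ 2 - l + (1 + s) / 2 - 1) * h.sq_sub_self hl + h.1 / 4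

theorem quartic_deriv_eq (h : IsRootParam s u) (hl : l = (1 - u) / 2) :
    4 * l ^ 3 - 6 * l ^ 2 + 1 = -(s * u) := by
  subst hl; linear_combination (-u / 2) * h.2

theorem cubic_eq (h : IsRootParam s u) (hl : l = (1 - u) / 2) :
    l ^ 3 - l ^ 2 + 1 = (s + 1) * (s - u) / 4 := by
  subst hl; linear_combination ((1 - u) / 8) * h.2 - h.1 / 4

theorem eq_of_mul_quartic_deriv_eq (h : IsRootParam s u) (hl : l = (1 - u) / 2)
    (hw : w * (4 * l ^ 3 - 6 * l ^ 2 + 1) = l ^ 3 - l ^ 2 + 1) :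
    w = (s + 1) / 4 * (1 / s - 1 / u) := by
  rw [h.quartic_deriv_eq hl, h.cubic_eq hl] at hw
  have hs := h.left_ne_zero
  have hu := h.right_ne_zero
  field_simp
  linear_combination -4 * hw

theorem injective (h : IsRootParam s u) (h' : IsRootParam (-s) v) :
    Function.Injective ![(1 - u) / 2, (1 + u) / 2, (1 - v) / 2, (1 + v) / 2] := by
  have hu := h.right_ne_zero
  have hv := h'.right_ne_zero
  have huv : u ^ 2 ≠ v ^ 2 := by
    rw [h.2, h'.2]
    intro huv
    exact h.left_ne_zero (by linear_combination huv / 4)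
  rw [← List.nodup_ofFn]
  simp only [List.ofFn_succ, List.ofFn_zero, List.nodup_cons, List.mem_cons, Matrix.cons_val_zero,
    Matrix.cons_val_succ, Matrix.cons_val_fin_one]
  grind

end IsRootParam

variable [CharZero K]

theorem solution_of_isRootParam (h : IsRootParam s u) (h' : IsRootParam (-s) v)
    {l1 l2 l3 l4 c1 c2 c3 c4 : K} (hl1 : l1 = (1 - u) / 2) (hl2 : l2 = (1 + u) / 2)
    (hl3 : l3 = (1 - v) / 2) (hl4 : l4 = (1 + v) / 2)
    (e1 : c1 * l1 + c2 * l2 + c3 * l3 + c4 * l4 = 1)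
    (e2 : c1 * l1 ^ 2 + c2 * l2 ^ 2 + c3 * l3 ^ 2 + c4 * l4 ^ 2 = 1)
    (e3 : c1 * l1 ^ 3 + c2 * l2 ^ 3 + c3 * l3 ^ 3 + c4 * l4 ^ 3 = 2)
    (e4 : c1 * l1 ^ 4 + c2 * l2 ^ 4 + c3 * l3 ^ 4 + c4 * l4 ^ 4 = 4) :
    c1 * l1 = (s + 1) / 4 * (1 / s - 1 / u) ∧ c2 * l2 = (s + 1) / 4 * (1 / s - 1 / -u) ∧
      c3 * l3 = (-s + 1) / 4 * (1 / -s - 1 / v) ∧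
        c4 * l4 = (-s + 1) / 4 * (1 / -s - 1 / -v) := by
  have hl2' : l2 = (1 - -u) / 2 := by rw [hl2, sub_neg_eq_add]
  have hl4' : l4 = (1 - -v) / 2 := by rw [hl4, sub_neg_eq_add]
  have hinj : Function.Injective ![l1, l2, l3, l4] := by
    subst hl1 hl2 hl3 hl4; exact h.injective h'
  have hroot : ∀ i, ![l1, l2, l3, l4] i ^ 4 + -2 * ![l1, l2, l3, l4] i ^ 3 +
      0 * ![l1, l2, l3, l4] i ^ 2 + 1 * ![l1, l2, l3, l4] i + -1 = 0 := by
    intro i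
    fin_cases i <;> simp only [Fin.zero_eta, Fin.mk_one, Fin.reduceFinMk, Matrix.cons_val,
      Matrix.cons_val_zero, Matrix.cons_val_one]
    · linear_combination h.quartic_eq_zero hl1
    · linear_combination h.neg.quartic_eq_zero hl2'
    · linear_combination h'.quartic_eq_zero hl3
    · linear_combination h'.neg.quartic_eq_zero hl4'
  have key : ∀ i, ![c1 * l1, c2 * l2, c3 * l3, c4 * l4] i *
      (4 * ![l1, l2, l3, l4] i ^ 3 - 6 * ![l1, l2, l3, l4] i ^ 2 + 1) =
        ![l1, l2, l3, l4] i ^ 3 - ![l1, l2, l3, l4] i ^ 2 + 1 := by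
    intro i
    have hi := mul_quartic_deriv_eq_moments (w := ![c1 * l1, c2 * l2, c3 * l3, c4 * l4]) hinj hroot i
    simp only [Fin.sum_univ_succ, Fin.sum_univ_zero, Matrix.cons_val_zero, Matrix.cons_val_succ] at hi
    set x := ![l1, l2, l3, l4] i
    linear_combination hi + e4 + (x - 2) * e3 + (x ^ 2 - 2 * x) * e2 + (x ^ 3 - 2 * x ^ 2 + 1) * e1
  exact ⟨h.eq_of_mul_quartic_deriv_eq hl1 (key 0), h.neg.eq_of_mul_quartic_deriv_eq hl2' (key 1),
    h'.eq_of_mul_quartic_deriv_eq hl3 (key 2), h'.neg.eq_of_mul_quartic_deriv_eq hl4' (key 3)⟩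

end RootParametrization

open Complex in
/-- Solving the Vandermonde-type linear system
`c₁λ₁^k + c₂λ₂^k + c₃λ₃^k + c₄λ₄^k = a_k` for `k = 1,2,3,4` with
`a₁ = 1, a₂ = 1, a₃ = 2, a₄ = 4`, where the `λ`'s are the four roots of
`x⁴ - 2x³ + x - 1`. -/
theorem linear_system_solution (l1 l2 l3 l4 c1 c2 c3 c4 : ℂ)
    (hl1 : l1 = (1 - (Real.sqrt (2 * Real.sqrt 5 + 3) : ℝ)) / 2)
    (hl2 : l2 = (1 + (Real.sqrt (2 * Real.sqrt 5 + 3) : ℝ)) / 2)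
    (hl3 : l3 = (1 - I * (Real.sqrt (2 * Real.sqrt 5 - 3) : ℝ)) / 2)
    (hl4 : l4 = (1 + I * (Real.sqrt (2 * Real.sqrt 5 - 3) : ℝ)) / 2)
    (e1 : c1 * l1 + c2 * l2 + c3 * l3 + c4 * l4 = 1)
    (e2 : c1 * l1 ^ 2 + c2 * l2 ^ 2 + c3 * l3 ^ 2 + c4 * l4 ^ 2 = 1)
    (e3 : c1 * l1 ^ 3 + c2 * l2 ^ 3 + c3 * l3 ^ 3 + c4 * l4 ^ 3 = 2)
    (e4 : c1 * l1 ^ 4 + c2 * l2 ^ 4 + c3 * l3 ^ 4 + c4 * l4 ^ 4 = 4) :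
    c1 * l1 = ((Real.sqrt 5 + 1) / 4 : ℝ) *
        ((1 / Real.sqrt 5 : ℝ) - (1 / Real.sqrt (2 * Real.sqrt 5 + 3) : ℝ)) ∧
      c2 * l2 = ((Real.sqrt 5 + 1) / 4 : ℝ) *
        ((1 / Real.sqrt 5 : ℝ) + (1 / Real.sqrt (2 * Real.sqrt 5 + 3) : ℝ)) ∧
      c3 * l3 = ((Real.sqrt 5 - 1) / 4 : ℝ) *
        ((1 / Real.sqrt 5 : ℝ) - I * (1 / Real.sqrt (2 * Real.sqrt 5 - 3) : ℝ)) ∧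
      c4 * l4 = ((Real.sqrt 5 - 1) / 4 : ℝ) *
        ((1 / Real.sqrt 5 : ℝ) + I * (1 / Real.sqrt (2 * Real.sqrt 5 - 3) : ℝ)) := by
  have h5 : Real.sqrt 5 ^ 2 = 5 := Real.sq_sqrt (by norm_num)
  have h5' : 3 / 2 < Real.sqrt 5 := by nlinarith [Real.sqrt_nonneg 5]
  push_cast
  set S : ℂ := ((Real.sqrt 5 : ℝ) : ℂ)
  set U : ℂ := ((Real.sqrt (2 * Real.sqrt 5 + 3) : ℝ) : ℂ)
  set V : ℂ := ((Real.sqrt (2 * Real.sqrt 5 - 3) : ℝ) : ℂ)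
  have hS : S ^ 2 = 5 := by simp only [S]; exact_mod_cast h5
  have hSU : IsRootParam S U :=
    ⟨hS, by simp only [U, S]; exact_mod_cast Real.sq_sqrt (by linarith)⟩
  have hSV : IsRootParam (-S) (I * V) := by
    have hV : V ^ 2 = 2 * S - 3 := by simp only [V, S]; exact_mod_cast Real.sq_sqrt (by linarith)
    exact ⟨by rw [neg_sq]; exact hS, by linear_combination V ^ 2 * I_sq - hV⟩
  obtain ⟨h1, h2, h3, h4⟩ := solution_of_isRootParam hSU hSV hl1 hl2 hl3 hl4 e1 e2 e3 e4
  refine ⟨h1, h2.trans (by ring), h3.trans ?_, h4.trans ?_⟩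
  · rw [one_div (I * V), mul_inv, inv_I]; ring
  · rw [one_div (-(I * V)), inv_neg, mul_inv, inv_I]; ring
end

section
/- For a feasible score sequence R of length n, the minimum number of upsets over all tournaments with score sequence R equals ℓ = sum over indices i with h_i > 0 of h_i, where h_i = r_i - (i-1) is the normalized score vector (Ryser's theorem). -/
/-!
Vertex `i` scores at most `i` points against the vertices before it, so row `i` of any
tournament with score sequence `r` holds at least `r_i - i` upsets; this is the lower bound.

For the upper bound we build a tournament by induction on `n`, in terms of the normalized
scores `h_i = r_i - i`. The first vertex beats a set `B` of `h_0` later vertices with `h_j < 0`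
and loses to all others: this accounts for `h_0` upsets and leaves the normalized scores
`h_{j+1} + [j + 1 ∈ B]`, whose positive parts sum to `ℓ - h_0`. The set `B` is filled from the
left, except that a run of drops `h_{j+1} = h_j - 1` is filled from its right end, which keeps
the reduced sequence nondecreasing. The Landau inequalities survive because, as `h` drops by at
most one per step, every nonempty prefix of `h` has sum plus number of negative entries at
least `h_0`.
-/

open Finset

lemma Finset.sum_filter_pos_eq_sum_posPart {ι α : Type*} [AddCommGroup α] [LinearOrder α]
    [IsOrderedAddMonoid α] (s : Finset ι) (f : ι → α) :
    ∑ i ∈ s with 0 < f i, f i = ∑ i ∈ s, (f i)⁺ := by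
  rw [sum_filter]
  refine sum_congr rfl fun i _ => ?_
  split_ifs with hi
  · exact (posPart_eq_self.2 hi.le).symm
  · exact (posPart_eq_zero.2 (not_lt.1 hi)).symm

section Sequences

variable {n : ℕ} {h : ℕ → ℤ} {B : Finset ℕ}

/-- The normalized score vector `h_j = r_j - j` of a feasible score sequence of length `n`,
extended by zeros: the Landau inequalities become nonnegativity of the prefix sums, and
monotonicity of `r` becomes `sub_one_le`. -/
structure IsNormalizedFeasible (n : ℕ) (h : ℕ → ℤ) : Prop where
  eq_zero_of_le : ∀ j, n ≤ j → h j = 0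
  sub_one_le : ∀ j, h j - 1 ≤ h (j + 1)
  sum_range_nonneg : ∀ k, 0 ≤ ∑ j ∈ range k, h j
  sum_range_eq_zero : ∑ j ∈ range n, h j = 0

lemma IsNormalizedFeasible.apply_zero_nonneg (hh : IsNormalizedFeasible n h) : 0 ≤ h 0 := by
  simpa using hh.sum_range_nonneg 1

lemma sub_le_of_forall_sub_one_le (hdrop : ∀ j, h j - 1 ≤ h (j + 1)) (j : ℕ) :
    h 0 - j ≤ h j := by
  induction j with
  | zero => simp
  | succ j ih => have := hdrop j; push_cast; omega

lemma card_filter_range_succ (p : ℕ → Prop) [DecidablePred p] (k : ℕ) :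
    #{j ∈ range (k + 1) | p j} = #{j ∈ range k | p j} + if p k then 1 else 0 := by
  simp only [card_filter, sum_range_succ]

lemma neg_card_neg_le (hdrop : ∀ j, h j - 1 ≤ h (j + 1)) (h0 : 0 ≤ h 0) (k : ℕ) :
    -(#{j ∈ range (k + 1) | h j < 0} : ℤ) ≤ h k := by
  induction k with
  | zero => simp only [zero_add, range_one]; omega
  | succ k ih =>
    rw [card_filter_range_succ]
    have := hdrop k
    split_ifs <;> push_cast <;> omega

lemma neg_mul_le_two_mul_sum_neg (hdrop : ∀ j, h j - 1 ≤ h (j + 1)) (h0 : 0 ≤ h 0) (k : ℕ) :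
    -((#{j ∈ range (k + 1) | h j < 0} : ℤ) * (#{j ∈ range (k + 1) | h j < 0} + 1)) ≤
      2 * ∑ j ∈ range (k + 1) with h j < 0, h j := by
  induction k with
  | zero =>
    have : ¬ h 0 < 0 := by omega
    simp [filter_singleton, this]
  | succ k ih =>
    have hk := neg_card_neg_le hdrop h0 (k + 1)
    rw [card_filter_range_succ] at hk ⊢
    rw [sum_filter, sum_range_succ, ← sum_filter]
    split_ifs at hk ⊢ <;> push_cast at hk ⊢ <;> nlinarith

lemma two_mul_sum_range_sub (m : ℤ) (M : ℕ) :
    2 * ∑ j ∈ range M, (m - j) = M * (2 * m - M + 1) := by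
  induction M with
  | zero => simp
  | succ M ih => rw [sum_range_succ, mul_add, ih]; push_cast; ring

theorem IsNormalizedFeasible.le_sum_range_add_card_neg (hh : IsNormalizedFeasible n h)
    (k : ℕ) : h 0 ≤ ∑ j ∈ range (k + 1), h j + #{j ∈ range (k + 1) | h j < 0} := by
  have h0 := hh.apply_zero_nonneg
  have hstair := sub_le_of_forall_sub_one_le hh.sub_one_le
  obtain ⟨M, hM⟩ : ∃ M : ℕ, h 0 = M := ⟨(h 0).toNat, (Int.toNat_of_nonneg h0).symm⟩
  by_cases hqM : M ≤ #{j ∈ range (k + 1) | h j < 0}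
  · have := hh.sum_range_nonneg (k + 1)
    omega
  replace hqM := not_le.1 hqM
  rcases lt_or_ge k M with hkM | hMk
  · have : 0 ≤ ∑ j ∈ range k, h (j + 1) := sum_nonneg fun j hj => by
      have := hstair (j + 1)
      rw [mem_range] at hj
      push_cast at this
      omega
    rw [sum_range_succ']
    omega
  · -- the first `M` terms are at least `M, …, 1`, the `q` negative ones at least `-1, …, -q`
    have hsub : range M ⊆ {j ∈ range (k + 1) | ¬ h j < 0} := fun j hj => by
      have := hstair j
      rw [mem_range] at hj
      rw [mem_filter, mem_range]
      omega
    have hpos : ∑ j ∈ range M, (h 0 - j) ≤ ∑ j ∈ range (k + 1) with ¬ h j < 0, h j :=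
      (sum_le_sum fun j _ => hstair j).trans
        (sum_le_sum_of_subset_of_nonneg hsub fun j hj _ => by rw [mem_filter] at hj; omega)
    have hneg := neg_mul_le_two_mul_sum_neg hh.sub_one_le h0 k
    have hgauss := two_mul_sum_range_sub (h 0) M
    rw [← sum_filter_add_sum_filter_not (range (k + 1)) (fun j => h j < 0), hM]
    rw [hM] at hgauss hpos
    nlinarith

lemma IsNormalizedFeasible.sub_le_sum_range_of_neg (hh : IsNormalizedFeasible n h) {k e : ℕ}
    (hke : k ≤ e) (hrun : ∀ t ∈ Ioc k e, h t < 0) :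
    (e - k : ℤ) ≤ ∑ j ∈ range (k + 1), h j := by
  have hIco : ∑ j ∈ Ico (k + 1) (e + 1), h j ≤ ∑ _j ∈ Ico (k + 1) (e + 1), (-1 : ℤ) :=
    sum_le_sum fun t ht => by
      rw [mem_Ico] at ht
      have := hrun t (mem_Ioc.2 ⟨by omega, by omega⟩)
      omega
  rw [sum_const, Nat.card_Ico, nsmul_eq_mul, mul_neg, mul_one,
    Nat.cast_sub (by omega)] at hIco
  have := sum_range_add_sum_Ico h (by omega : k + 1 ≤ e + 1)
  have := hh.sum_range_nonneg (e + 1)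
  push_cast at hIco
  linarith

/-- The admissible sets of later vertices beaten by the first vertex: `succ_mem` keeps the
reduced score sequence nondecreasing, and `neg_of_notMem` (`B` is filled from the left, up to
runs of negative entries) keeps the Landau inequalities. -/
structure IsBeatenSet (h : ℕ → ℤ) (B : Finset ℕ) : Prop where
  neg : ∀ j ∈ B, h j < 0
  succ_mem : ∀ j ∈ B, h (j + 1) = h j - 1 → j + 1 ∈ B
  neg_of_notMem : ∀ x, h x < 0 → x ∉ B → ∀ y ∈ B, ∀ t, x ≤ t → t ≤ y → h t < 0

lemma IsBeatenSet.exists_insert {s : Finset ℕ} (hB : IsBeatenSet h B)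
    (hs : ∀ j, j ∈ s ↔ h j < 0) (hne : (s \ B).Nonempty) :
    ∃ z ∈ s \ B, IsBeatenSet h (insert z B) := by
  obtain ⟨x, hx, hxmin⟩ := (s \ B).exists_min_image id hne
  -- `z` is the last candidate in the run of drops starting at the leftmost candidate `x`
  set C := {t ∈ s \ B | x ≤ t ∧ ∀ u ∈ Ico x t, h u < 0 ∧ h (u + 1) = h u - 1}
  have hxC : x ∈ C := by
    simpa [C, hx] using fun u h1 h2 => absurd h2 (not_lt.2 h1)
  obtain ⟨z, hzC, hzmax⟩ := C.exists_max_image id ⟨x, hxC⟩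
  simp only [C, mem_filter, mem_sdiff, mem_Ico] at hzC hzmax
  obtain ⟨⟨hzs, hzB⟩, hxz, hrun⟩ := hzC
  refine ⟨z, mem_sdiff.2 ⟨hzs, hzB⟩, fun j hj => ?_, fun j hj hdrop => ?_,
    fun x' hx' hx'B y hy t hxt hty => ?_⟩
  · rcases mem_insert.1 hj with rfl | hj
    · exact (hs j).1 hzs
    · exact hB.neg j hj
  · rcases mem_insert.1 hj with rfl | hj
    · by_contra hnot
      rw [mem_insert, not_or] at hnot
      have hneg : h (j + 1) < 0 := by have := (hs j).1 hzs; omega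
      have := hzmax (j + 1) ⟨⟨(hs _).2 hneg, hnot.2⟩, by omega, fun u hu => by
        rcases lt_or_eq_of_le (Nat.le_of_lt_succ hu.2) with hu' | rfl
        · exact hrun u ⟨hu.1, hu'⟩
        · exact ⟨(hs u).1 hzs, hdrop⟩⟩
      simp at this
    · exact mem_insert_of_mem (hB.succ_mem j hj hdrop)
  · rw [mem_insert, not_or] at hx'B
    rcases mem_insert.1 hy with rfl | hy
    · have : x ≤ x' := hxmin x' (mem_sdiff.2 ⟨(hs x').2 hx', hx'B.2⟩)
      rcases lt_or_eq_of_le hty with hty | rfl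
      · exact (hrun t ⟨by omega, hty⟩).1
      · exact (hs t).1 hzs
    · exact hB.neg_of_notMem x' hx' hx'B.2 y hy t hxt hty

lemma exists_isBeatenSet_card (hzero : ∀ j, n ≤ j → h j = 0) (c : ℕ)
    (hc : c ≤ #{j ∈ range n | h j < 0}) :
    ∃ B ⊆ {j ∈ range n | h j < 0}, IsBeatenSet h B ∧ #B = c := by
  have hs (j : ℕ) : j ∈ {j ∈ range n | h j < 0} ↔ h j < 0 := by
    rw [mem_filter, mem_range, and_iff_right_iff_imp]
    intro hj
    by_contra hn
    rw [hzero j (not_lt.1 hn)] at hj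
    exact lt_irrefl 0 hj
  induction c with
  | zero => exact ⟨∅, empty_subset _, ⟨by simp, by simp, by simp⟩, rfl⟩
  | succ c ih =>
    obtain ⟨B, hBs, hB, rfl⟩ := ih (by omega)
    have hne : ({j ∈ range n | h j < 0} \ B).Nonempty := by
      rw [← card_pos, card_sdiff_of_subset hBs]
      omega
    obtain ⟨z, hz, hzB⟩ := hB.exists_insert hs hne
    rw [mem_sdiff] at hz
    exact ⟨insert z B, insert_subset hz.1 hBs, hzB, card_insert_of_notMem hz.2⟩

theorem IsNormalizedFeasible.exists_isBeatenSet (hh : IsNormalizedFeasible n h) :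
    ∃ B, IsBeatenSet h B ∧ (#B : ℤ) = h 0 := by
  have hcount := hh.le_sum_range_add_card_neg n
  rw [sum_range_succ, hh.sum_range_eq_zero, card_filter_range_succ,
    hh.eq_zero_of_le n le_rfl] at hcount
  have h0 := hh.apply_zero_nonneg
  obtain ⟨B, -, hB, hBc⟩ := exists_isBeatenSet_card hh.eq_zero_of_le (h 0).toNat
    (by simp only [add_zero, lt_self_iff_false, if_false, zero_add] at hcount; omega)
  exact ⟨B, hB, by rw [hBc]; omega⟩

theorem IsBeatenSet.le_sum_range_add_card_inter (hB : IsBeatenSet h B)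
    (hh : IsNormalizedFeasible n h) (hcard : (#B : ℤ) = h 0) (k : ℕ) :
    h 0 ≤ ∑ j ∈ range (k + 1), h j + #(B ∩ range (k + 1)) := by
  by_cases hall : ∀ x ∈ range (k + 1), h x < 0 → x ∈ B
  · have hle : #{j ∈ range (k + 1) | h j < 0} ≤ #(B ∩ range (k + 1)) :=
      card_le_card fun x hx => by
        rw [mem_filter] at hx
        exact mem_inter.2 ⟨hall x hx.1 hx.2, hx.1⟩
    have := hh.le_sum_range_add_card_neg k
    omega
  simp only [not_forall] at hall
  obtain ⟨x, hxk, hxneg, hxB⟩ := hall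
  rw [mem_range] at hxk
  by_cases hfar : ∃ y ∈ B, k < y
  · obtain ⟨y, hyB, hky⟩ := hfar
    obtain ⟨e, heB, hemax⟩ := B.exists_max_image id ⟨y, hyB⟩
    have hke : k < e := lt_of_lt_of_le hky (hemax y hyB)
    have hrun := hh.sub_le_sum_range_of_neg hke.le fun t ht => by
      rw [mem_Ioc] at ht
      exact hB.neg_of_notMem x hxneg hxB e heB t (by omega) ht.2
    have hcardB : #B ≤ #(B ∩ range (k + 1)) + (e - k) :=
      calc #B ≤ #(B ∩ range (k + 1) ∪ Ioc k e) := card_le_card fun t ht =>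
              if htk : t < k + 1 then mem_union_left _ (mem_inter.2 ⟨ht, mem_range.2 htk⟩)
              else mem_union_right _ (mem_Ioc.2 ⟨by omega, hemax t ht⟩)
        _ ≤ #(B ∩ range (k + 1)) + (e - k) := by
              rw [← Nat.card_Ioc k e]
              exact card_union_le _ _
    omega
  · simp only [not_exists, not_and, not_lt] at hfar
    have hBk : B ∩ range (k + 1) = B :=
      inter_eq_left.2 fun y hy => mem_range.2 (Nat.lt_succ_of_le (hfar y hy))
    rw [hBk, hcard]
    linarith [hh.sum_range_nonneg (k + 1)]

lemma sum_range_ite_succ_mem (hB0 : 0 ∉ B) (k : ℕ) :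
    ∑ j ∈ range k, (if j + 1 ∈ B then 1 else 0 : ℤ) = #(B ∩ range (k + 1)) := by
  have := sum_range_succ' (fun j => if j ∈ B then (1 : ℤ) else 0) k
  rw [if_neg hB0, add_zero, sum_boole, filter_mem_eq_inter, inter_comm] at this
  exact this.symm

lemma IsBeatenSet.inter_range_eq (hB : IsBeatenSet h B) (hh : IsNormalizedFeasible n h) :
    B ∩ range n = B :=
  inter_eq_left.2 fun j hj => by
    by_contra hn
    have := hh.eq_zero_of_le j (not_lt.1 (mem_range.not.1 hn))
    have := hB.neg j hj
    omega

theorem IsNormalizedFeasible.reduce (hh : IsNormalizedFeasible (n + 1) h)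
    (hB : IsBeatenSet h B) (hcard : (#B : ℤ) = h 0) :
    IsNormalizedFeasible n (fun j => h (j + 1) + if j + 1 ∈ B then 1 else 0) := by
  have hB0 : 0 ∉ B := fun hmem => (hB.neg 0 hmem).not_ge hh.apply_zero_nonneg
  have hsum (k : ℕ) : ∑ j ∈ range k, (h (j + 1) + if j + 1 ∈ B then 1 else 0) =
      ∑ j ∈ range (k + 1), h j - h 0 + #(B ∩ range (k + 1)) := by
    rw [sum_add_distrib, sum_range_ite_succ_mem hB0, sum_range_succ']
    ring
  refine ⟨fun j hj => ?_, fun j => ?_, fun k => ?_, ?_⟩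
  · have hzero : h (j + 1) = 0 := hh.eq_zero_of_le _ (by omega)
    have : j + 1 ∉ B := fun hmem => by have := hB.neg _ hmem; omega
    simp [hzero, this]
  · have hdrop := hh.sub_one_le (j + 1)
    by_cases hj : j + 1 ∈ B
    · by_cases hj' : j + 1 + 1 ∈ B
      · simp only [hj, hj', if_true]; omega
      · have : h (j + 1 + 1) ≠ h (j + 1) - 1 := fun heq => hj' (hB.succ_mem _ hj heq)
        simp only [hj, hj', if_true, if_false]; omega
    · split_ifs <;> omega
  · rw [hsum]
    linarith [hB.le_sum_range_add_card_inter hh hcard k]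
  · rw [hsum, hh.sum_range_eq_zero, hB.inter_range_eq hh, hcard]
    ring

end Sequences

section Tournaments

variable {n : ℕ}

lemma upsets_eq_sum (A : Fin n → Fin n → ℤ) :
    (upsets A : ℤ) = ∑ i, ∑ j, if i < j ∧ A i j = 1 then 1 else 0 := by
  rw [upsets, ← sum_boole, Fintype.sum_prod_type]

theorem IsTournament.sum_posPart_le_upsets {A : Fin n → Fin n → ℤ} (hA : IsTournament A) :
    ∑ i, (∑ j, A i j - i)⁺ ≤ (upsets A : ℤ) := by
  rw [upsets_eq_sum]
  refine sum_le_sum fun i _ => max_le ?_ (sum_nonneg fun j _ => by split_ifs <;> norm_num)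
  have hentry (j : Fin n) :
      A i j ≤ (if j < i then 1 else 0) + if i < j ∧ A i j = 1 then 1 else 0 := by
    rcases lt_trichotomy i j with hij | rfl | hji
    · rcases hA.2 i j hij.ne with ⟨h1, _⟩ | ⟨h1, _⟩ <;> simp [h1, hij, hij.not_gt]
    · simp [hA.1]
    · rcases hA.2 i j hji.ne' with ⟨h1, _⟩ | ⟨h1, _⟩ <;> simp [h1, hji, hji.not_gt]
  have := sum_le_sum fun j (_ : j ∈ univ) => hentry j
  rw [sum_add_distrib, sum_boole, filter_gt_eq_Iio, Fin.card_Iio] at this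
  linarith

def consTournament (W : Finset (Fin n)) (A : Fin n → Fin n → ℤ) :
    Fin (n + 1) → Fin (n + 1) → ℤ :=
  Fin.cons (Fin.cons 0 fun j => if j ∈ W then 1 else 0)
    fun i => Fin.cons (if i ∈ W then 0 else 1) (A i)

variable (W : Finset (Fin n)) {A : Fin n → Fin n → ℤ}

theorem IsTournament.cons (hA : IsTournament A) : IsTournament (consTournament W A) := by
  refine ⟨Fin.cases (by simp [consTournament]) fun i => by simp [consTournament, hA.1], ?_⟩
  intro i j hij
  cases i using Fin.cases <;> cases j using Fin.cases
  · exact absurd rfl hij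
  all_goals simp only [consTournament, Fin.cons_zero, Fin.cons_succ]
  · split_ifs <;> simp
  · split_ifs <;> simp
  · exact hA.2 _ _ fun h => hij (congrArg Fin.succ h)

lemma sum_consTournament_zero : ∑ j, consTournament W A 0 j = #W := by
  simp [consTournament, Fin.sum_univ_succ]

lemma sum_consTournament_succ (i : Fin n) :
    ∑ j, consTournament W A i.succ j = (if i ∈ W then 0 else 1) + ∑ j, A i j := by
  simp [consTournament, Fin.sum_univ_succ]

lemma upsets_consTournament : (upsets (consTournament W A) : ℤ) = #W + upsets A := by
  rw [upsets_eq_sum, upsets_eq_sum, Fin.sum_univ_succ]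
  simp only [consTournament, Fin.sum_univ_succ, Fin.cons_zero, Fin.cons_succ, Fin.succ_pos,
    Fin.succ_lt_succ_iff, Fin.not_lt_zero, lt_self_iff_false, false_and, if_false, true_and,
    zero_add]
  rw [sum_boole]
  congr 3
  ext x
  simp

end Tournaments

theorem IsNormalizedFeasible.exists_tournament :
    ∀ {n : ℕ} {h : ℕ → ℤ}, IsNormalizedFeasible n h →
      ∃ A : Fin n → Fin n → ℤ, IsTournament A ∧ (∀ i : Fin n, ∑ j, A i j = h i + i) ∧
        (upsets A : ℤ) = ∑ j ∈ range n, (h j)⁺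
  | 0, _, _ => ⟨fun _ _ => 0, ⟨finZeroElim, finZeroElim⟩, finZeroElim, by simp [upsets]⟩
  | n + 1, h, hh => by
    obtain ⟨B, hB, hcard⟩ := hh.exists_isBeatenSet
    obtain ⟨A, hA, hrow, hup⟩ := (hh.reduce hB hcard).exists_tournament
    have hB0 : 0 ∉ B := fun hmem => (hB.neg 0 hmem).not_ge hh.apply_zero_nonneg
    set W : Finset (Fin n) := {i | (i : ℕ) + 1 ∈ B}
    have hW : (#W : ℤ) = h 0 := by
      rw [← hcard, ← hB.inter_range_eq hh, ← sum_range_ite_succ_mem hB0, ← sum_boole,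
        Fin.sum_univ_eq_sum_range (fun j => if j + 1 ∈ B then (1 : ℤ) else 0)]
    refine ⟨consTournament W A, hA.cons W, fun i => ?_, ?_⟩
    · cases i using Fin.cases with
      | zero => simp [sum_consTournament_zero, hW]
      | succ i =>
        rw [sum_consTournament_succ, hrow]
        simp only [W, mem_filter, mem_univ, true_and, Fin.val_succ]
        split_ifs <;> push_cast <;> ring
    · rw [upsets_consTournament, hup, hW, sum_range_succ' (fun j => (h j)⁺),
        posPart_eq_self.2 hh.apply_zero_nonneg, add_comm]
      congr 1
      refine sum_congr rfl fun j _ => ?_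
      split_ifs with hj
      · have := hB.neg _ hj
        rw [posPart_eq_zero.2 (by omega), posPart_eq_zero.2 (by omega)]
      · rw [add_zero]

section Bridge

variable {n : ℕ} (r : Fin n → ℤ)

def normalizedScore (j : ℕ) : ℤ := (normalized n r).getD j 0

lemma normalizedScore_apply (j : ℕ) :
    normalizedScore r j = if hj : j < n then r ⟨j, hj⟩ - j else 0 := by
  simp only [normalizedScore, normalized, List.getD_eq_getElem?_getD, List.getElem?_ofFn]
  split_ifs <;> rfl

lemma normalizedScore_fin (i : Fin n) : normalizedScore r i = r i - i := by
  simp [normalizedScore_apply]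

lemma sum_range_normalizedScore {k : ℕ} (hk : k ≤ n) :
    ∑ j ∈ range k, normalizedScore r j =
      ∑ i ∈ Finset.univ.filter (fun i : Fin n => (i : ℕ) < k), r i - k.choose 2 := by
  have hchoose : ∑ j ∈ range k, (j : ℤ) = k.choose 2 := by
    rw [Nat.choose_two_right, ← sum_range_id]
    push_cast
    rfl
  have hmap : (Finset.univ.filter (fun i : Fin n => (i : ℕ) < k)).map Fin.valEmbedding =
      range k := by
    ext j
    simp only [mem_map, mem_filter, mem_univ, true_and, Fin.valEmbedding_apply, mem_range]
    exact ⟨fun ⟨i, hi, hij⟩ => hij ▸ hi, fun hj => ⟨⟨j, by omega⟩, hj, rfl⟩⟩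
  have hsum : ∑ i ∈ Finset.univ.filter (fun i : Fin n => (i : ℕ) < k), r i =
      ∑ j ∈ range k, (normalizedScore r j + j) := by
    rw [← hmap, sum_map]
    exact sum_congr rfl fun i _ => by simp [normalizedScore_fin]
  rw [hsum, sum_add_distrib, hchoose]
  ring

theorem IsFeasible.isNormalizedFeasible {r : Fin n → ℤ} (hR : IsFeasible n r) :
    IsNormalizedFeasible n (normalizedScore r) := by
  obtain ⟨hmono, htotal, hlandau⟩ := hR
  have hzero (j : ℕ) (hj : n ≤ j) : normalizedScore r j = 0 := by
    rw [normalizedScore_apply, dif_neg (not_lt.2 hj)]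
  have hprefix (k : ℕ) (hk : k ≤ n) : 0 ≤ ∑ j ∈ range k, normalizedScore r j := by
    rw [sum_range_normalizedScore r hk]
    linarith [hlandau k hk]
  have htotal' : ∑ j ∈ range n, normalizedScore r j = 0 := by
    rw [sum_range_normalizedScore r le_rfl, filter_true_of_mem fun i _ => i.isLt, htotal,
      sub_self]
  refine ⟨hzero, fun j => ?_, fun k => ?_, htotal'⟩
  · rcases lt_or_ge (j + 1) n with hj | hj
    · have := hmono (Fin.mk_le_mk.2 (Nat.le_succ j) : (⟨j, by omega⟩ : Fin n) ≤ ⟨j + 1, hj⟩)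
      rw [normalizedScore_apply, normalizedScore_apply, dif_pos (by omega), dif_pos hj]
      push_cast
      linarith
    rw [hzero (j + 1) hj]
    rcases lt_or_ge j n with hjn | hjn
    · have hlast := hprefix j hjn.le
      have := sum_range_succ (normalizedScore r) j
      rw [show j + 1 = n by omega, htotal'] at this
      linarith
    · rw [hzero j hjn]
      norm_num
  · rcases le_total k n with hk | hk
    · exact hprefix k hk
    · rw [← sum_range_add_sum_Ico _ hk, htotal',
        sum_eq_zero fun j hj => hzero j (mem_Ico.1 hj).1, add_zero]

end Bridge

/-- Ryser's theorem: for a feasible score sequence `r`, the minimum number of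
upsets over all tournaments with score sequence `r` equals
`ℓ = ∑_{h_i > 0} h_i`, where `h_i = r_i - (i-1)`. -/
theorem ryser_min_upsets (n : ℕ) (r : Fin n → ℤ) (hR : IsFeasible n r) :
    IsLeast {m : ℤ | ∃ A : Fin n → Fin n → ℤ,
        IsTournament A ∧ (∀ i, (∑ j, A i j) = r i) ∧ (upsets A : ℤ) = m}
      (∑ i ∈ Finset.univ.filter (fun i : Fin n => 0 < r i - (i : ℕ)),
        (r i - (i : ℕ))) := by
  have hbound (A : Fin n → Fin n → ℤ) (hrow : ∀ i, ∑ j, A i j = r i) :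
      ∑ i ∈ Finset.univ.filter (fun i : Fin n => 0 < r i - (i : ℕ)), (r i - (i : ℕ)) =
        ∑ i, (∑ j, A i j - i)⁺ := by
    simp_rw [hrow]
    exact sum_filter_pos_eq_sum_posPart _ _
  obtain ⟨A, hA, hrow, hup⟩ := hR.isNormalizedFeasible.exists_tournament
  have hrow' (i : Fin n) : ∑ j, A i j = r i := by
    rw [hrow, normalizedScore_fin]
    ring
  refine ⟨⟨A, hA, hrow', ?_⟩, ?_⟩
  · rw [hup, hbound A hrow', ← Fin.sum_univ_eq_sum_range (fun j => (normalizedScore r j)⁺)]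
    simp [normalizedScore_fin, hrow']
  · rintro _ ⟨A, hA, hrow, rfl⟩
    rw [hbound A hrow]
    exact hA.sum_posPart_le_upsets
end
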